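/- arXiv:2407.21166 — 7 statements merged into one kernel-verified Lean document; each statement's English description precedes it below -/
import Mathlib

section
/- Every left Noetherian domain is a left Ore domain: if R is a domain (a nontrivial ring with no zero divisors) that is left Noetherian, then for all nonzero a, b ∈ R one has Ra ∩ Rb ≠ 0. -/
/-!
If `Ra ∩ Rb = 0` for nonzero `a, b` in a domain `R`, then `a` and `b` are left linearly
independent, so `R²` embeds into `R`. A nontrivial left Noetherian ring satisfies the strong rank
condition (`IsNoetherianRing.strongRankCondition`), which forbids this.
-/

open Submodule

theorem LinearIndependent.pair_of_span_inf_span_eq_bot {R M : Type*} [Ring R] [IsDomain R]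
    [AddCommGroup M] [Module R M] [Module.IsTorsionFree R M] {x y : M} (hx : x ≠ 0) (hy : y ≠ 0)
    (h : span R {x} ⊓ span R {y} = ⊥) : LinearIndependent R ![x, y] := by
  refine LinearIndependent.pair_iff.mpr fun s t hst => ?_
  have hsx : s • x = -(t • y) := eq_neg_of_add_eq_zero_left hst
  have hsx_mem : s • x ∈ span R {x} ⊓ span R {y} :=
    ⟨smul_mem _ s (mem_span_singleton_self x),
      hsx ▸ neg_mem (smul_mem _ t (mem_span_singleton_self y))⟩
  rw [h, mem_bot] at hsx_mem
  have hty : t • y = 0 := neg_eq_zero.mp (hsx ▸ hsx_mem)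
  exact ⟨(smul_eq_zero.mp hsx_mem).resolve_right hx, (smul_eq_zero.mp hty).resolve_right hy⟩

theorem span_singleton_inf_span_singleton_ne_bot {R : Type*} [Ring R] [IsDomain R]
    [StrongRankCondition R] {a b : R} (ha : a ≠ 0) (hb : b ≠ 0) :
    span R {a} ⊓ span R {b} ≠ ⊥ := fun h => by
  have h21 : 2 ≤ 1 := by
    simpa using (LinearIndependent.pair_of_span_inf_span_eq_bot ha hb h).fintype_card_le_finrank
  omega

/-- Every left Noetherian domain is a left Ore domain: if `R` is a nontrivial ring
with no zero divisors which is left Noetherian, then for all nonzero `a b : R`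
the left ideals `Ra` and `Rb` intersect nontrivially. -/
theorem stmt_2 (R : Type*) [Ring R] [Nontrivial R] [NoZeroDivisors R]
    [IsNoetherianRing R] (a b : R) (ha : a ≠ 0) (hb : b ≠ 0) :
    Submodule.span R ({a} : Set R) ⊓ Submodule.span R ({b} : Set R) ≠ ⊥ :=
  have := NoZeroDivisors.to_isDomain R
  span_singleton_inf_span_singleton_ne_bot ha hb
end

section
/- (Jategaonkar) Let k be a field and R a k-algebra that is a domain. If there is no injective k-algebra homomorphism from the free associative algebra k⟨x, y⟩ on two generators into R, then R is an Ore domain: for all nonzero a, b ∈ R, Ra ∩ Rb ≠ 0 and aR ∩ bR ≠ 0. -/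
open Finsupp

section Aux

variable {k R : Type*} [Field k] [Ring R] [Nontrivial R] [NoZeroDivisors R] [Algebra k R]

/-- word evaluation -/
def mword (a b : R) : List (Fin 2) → R := fun l => (l.map ![a, b]).prod

lemma mword_nil (a b : R) : mword a b [] = 1 := rfl

lemma mword_cons (a b : R) (i : Fin 2) (w : List (Fin 2)) :
    mword a b (i :: w) = ![a, b] i * mword a b w := by simp [mword]

lemma mword_concat (a b : R) (i : Fin 2) (w : List (Fin 2)) :
    mword a b (w ++ [i]) = mword a b w * ![a, b] i := by simp [mword]

lemma fin2_cases (i : Fin 2) : i = 0 ∨ i = 1 := by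
  fin_cases i
  exacts [Or.inl rfl, Or.inr rfl]

lemma chr {a b : R} (ha : a ≠ 0) (hb : b ≠ 0)
    (H : ∀ r s : R, a * r = b * s → a * r = 0) {x y : R}
    (hxy : a * x = b * y) : x = 0 ∧ y = 0 := by
  have h1 : a * x = 0 := H x y hxy
  have h2 : b * y = 0 := hxy ▸ h1
  exact ⟨(mul_eq_zero.mp h1).resolve_left ha, (mul_eq_zero.mp h2).resolve_left hb⟩

lemma chl {a b : R} (ha : a ≠ 0) (hb : b ≠ 0)
    (H : ∀ r s : R, r * a = s * b → r * a = 0) {x y : R}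
    (hxy : x * a = y * b) : x = 0 ∧ y = 0 := by
  have h1 : x * a = 0 := H x y hxy
  have h2 : y * b = 0 := hxy ▸ h1
  exact ⟨(mul_eq_zero.mp h1).resolve_right ha, (mul_eq_zero.mp h2).resolve_right hb⟩

lemma ringR {a b : R} (ha : a ≠ 0) (hb : b ≠ 0)
    (H : ∀ r s : R, a * r = b * s → a * r = 0)
    {c : k} {g h : R} (E : algebraMap k R c + a * g + b * h = 0) :
    c = 0 ∧ g = 0 ∧ h = 0 := by
  set C := algebraMap k R c with hC
  have Ea : a * (C + g * a) = b * (-(h * a)) := by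
    have h0 : (C + a * g + b * h) * a = 0 := by rw [E, zero_mul]
    have h1 : a * (C + g * a) + b * (h * a) = (C + a * g + b * h) * a := by
      rw [add_mul, add_mul, mul_add, Algebra.commutes]
      noncomm_ring
    rw [mul_neg]
    exact eq_neg_of_add_eq_zero_left (h1.trans h0)
  obtain ⟨hX, hY⟩ := chr ha hb H Ea
  have hh : h = 0 := (mul_eq_zero.mp (neg_eq_zero.mp hY)).resolve_right ha
  have Eb : a * (g * b) = b * (-C) := by
    have h0 : (C + a * g + b * h) * b = 0 := by rw [E, zero_mul]
    rw [hh, mul_zero, add_zero, add_mul, Algebra.commutes] at h0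
    rw [mul_neg, ← mul_assoc]
    exact eq_neg_of_add_eq_zero_right h0
  obtain ⟨hg', hc'⟩ := chr ha hb H Eb
  have hg : g = 0 := (mul_eq_zero.mp hg').resolve_right hb
  have hc : c = 0 := by
    have hC0 : algebraMap k R c = 0 := by rw [← hC]; exact neg_eq_zero.mp hc'
    exact (algebraMap k R).injective (hC0.trans (map_zero _).symm)
  exact ⟨hc, hg, hh⟩

lemma ringL {a b : R} (ha : a ≠ 0) (hb : b ≠ 0)
    (H : ∀ r s : R, r * a = s * b → r * a = 0)
    {c : k} {g h : R} (E : algebraMap k R c + g * a + h * b = 0) :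
    c = 0 ∧ g = 0 ∧ h = 0 := by
  set C := algebraMap k R c with hC
  have Ea : (C + a * g) * a = (-(a * h)) * b := by
    have h0 : a * (C + g * a + h * b) = 0 := by rw [E, mul_zero]
    have h1 : (C + a * g) * a + (a * h) * b = a * (C + g * a + h * b) := by
      rw [mul_add, mul_add, add_mul, Algebra.commutes]
      noncomm_ring
    rw [neg_mul]
    exact eq_neg_of_add_eq_zero_left (h1.trans h0)
  obtain ⟨hX, hY⟩ := chl ha hb H Ea
  have hh : h = 0 := (mul_eq_zero.mp (neg_eq_zero.mp hY)).resolve_left ha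
  have Eb : (b * g) * a = (-C) * b := by
    have h0 : b * (C + g * a + h * b) = 0 := by rw [E, mul_zero]
    rw [hh, zero_mul, add_zero, mul_add] at h0
    have h2 : b * (g * a) = -(b * C) := eq_neg_of_add_eq_zero_right h0
    rw [← mul_assoc] at h2
    rw [h2, hC, neg_mul]
    exact congrArg Neg.neg (Algebra.commutes c b).symm
  obtain ⟨hg', hc'⟩ := chl ha hb H Eb
  have hg : g = 0 := (mul_eq_zero.mp hg').resolve_left hb
  have hc : c = 0 := by
    have hC0 : algebraMap k R c = 0 := by rw [← hC]; exact neg_eq_zero.mp hc'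
    exact (algebraMap k R).injective (hC0.trans (map_zero _).symm)
  exact ⟨hc, hg, hh⟩

lemma pull_left (a b r : R) (d : List (Fin 2) →₀ k) :
    Finsupp.linearCombination k (fun w => r * mword a b w) d
      = r * Finsupp.linearCombination k (mword a b) d := by
  rw [Finsupp.linearCombination_apply, Finsupp.linearCombination_apply, Finsupp.mul_sum]
  exact Finsupp.sum_congr fun w _ => (mul_smul_comm _ _ _).symm

lemma pull_right (a b r : R) (d : List (Fin 2) →₀ k) :
    Finsupp.linearCombination k (fun w => mword a b w * r) d
      = Finsupp.linearCombination k (mword a b) d * r := by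
  rw [Finsupp.linearCombination_apply, Finsupp.linearCombination_apply, Finsupp.sum_mul]
  exact Finsupp.sum_congr fun w _ => (smul_mul_assoc _ _ _).symm

lemma keyR {a b : R} (ha : a ≠ 0) (hb : b ≠ 0)
    (H : ∀ r s : R, a * r = b * s → a * r = 0) :
    ∀ n (c : List (Fin 2) →₀ k), (∀ w ∈ c.support, w.length < n) →
      Finsupp.linearCombination k (mword a b) c = 0 → c = 0 := by
  intro n
  induction n with
  | zero => intro c hlen _; ext w
            by_contra hw
            exact absurd (hlen w (Finsupp.mem_support_iff.mpr (by simpa using hw))) (by omega)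
  | succ n ih =>
    intro c hlen hcomb
    have inj0 : Function.Injective (fun w : List (Fin 2) => (0 : Fin 2) :: w) :=
      fun x y h => by simpa using h
    have inj1 : Function.Injective (fun w : List (Fin 2) => (1 : Fin 2) :: w) :=
      fun x y h => by simpa using h
    set c0 := Finsupp.comapDomain _ c inj0.injOn with hc0
    set c1 := Finsupp.comapDomain _ c inj1.injOn with hc1
    have hdec : c = Finsupp.single [] (c [])
        + Finsupp.mapDomain (fun w => (0 : Fin 2) :: w) c0
        + Finsupp.mapDomain (fun w => (1 : Fin 2) :: w) c1 := by
      ext w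
      rcases w with _ | ⟨i, t⟩
      · rw [Finsupp.add_apply, Finsupp.add_apply,
          Finsupp.mapDomain_notin_range _ _ (by simp),
          Finsupp.mapDomain_notin_range _ _ (by simp)]
        simp
      · rcases fin2_cases i with rfl | rfl
        · rw [Finsupp.add_apply, Finsupp.add_apply,
            Finsupp.mapDomain_apply inj0, Finsupp.mapDomain_notin_range _ _ (by simp),
            hc0, Finsupp.comapDomain_apply]
          simp
        · rw [Finsupp.add_apply, Finsupp.add_apply,
            Finsupp.mapDomain_notin_range _ _ (by simp), Finsupp.mapDomain_apply inj1,
            hc1, Finsupp.comapDomain_apply]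
          simp
    have hE : algebraMap k R (c [])
        + a * Finsupp.linearCombination k (mword a b) c0
        + b * Finsupp.linearCombination k (mword a b) c1 = 0 := by
      have e0 : Finsupp.linearCombination k (mword a b)
          (Finsupp.mapDomain (fun w => (0 : Fin 2) :: w) c0)
          = a * Finsupp.linearCombination k (mword a b) c0 := by
        have hfun : (mword a b ∘ fun w => (0 : Fin 2) :: w)
            = fun w : List (Fin 2) => a * mword a b w := by
          funext w; simp [mword_cons]
        rw [Finsupp.linearCombination_mapDomain, hfun, pull_left]
      have e1 : Finsupp.linearCombination k (mword a b)
          (Finsupp.mapDomain (fun w => (1 : Fin 2) :: w) c1)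
          = b * Finsupp.linearCombination k (mword a b) c1 := by
        have hfun : (mword a b ∘ fun w => (1 : Fin 2) :: w)
            = fun w : List (Fin 2) => b * mword a b w := by
          funext w; simp [mword_cons]
        rw [Finsupp.linearCombination_mapDomain, hfun, pull_left]
      have := hcomb
      rw [hdec] at this
      rw [map_add, map_add, e0, e1, Finsupp.linearCombination_single, mword_nil] at this
      rwa [Algebra.algebraMap_eq_smul_one]
    obtain ⟨hcc, hg, hh⟩ := ringR ha hb H hE
    have hsup0 : ∀ w ∈ c0.support, w.length < n := by
      intro w hw
      rw [Finsupp.mem_support_iff, hc0, Finsupp.comapDomain_apply] at hw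
      have := hlen _ (Finsupp.mem_support_iff.mpr hw)
      simp only [List.length_cons] at this
      omega
    have hsup1 : ∀ w ∈ c1.support, w.length < n := by
      intro w hw
      rw [Finsupp.mem_support_iff, hc1, Finsupp.comapDomain_apply] at hw
      have := hlen _ (Finsupp.mem_support_iff.mpr hw)
      simp only [List.length_cons] at this
      omega
    have h0 : c0 = 0 := ih c0 hsup0 hg
    have h1 : c1 = 0 := ih c1 hsup1 hh
    rw [hdec, hcc, h0, h1]
    simp

lemma keyL {a b : R} (ha : a ≠ 0) (hb : b ≠ 0)
    (H : ∀ r s : R, r * a = s * b → r * a = 0) :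
    ∀ n (c : List (Fin 2) →₀ k), (∀ w ∈ c.support, w.length < n) →
      Finsupp.linearCombination k (mword a b) c = 0 → c = 0 := by
  intro n
  induction n with
  | zero => intro c hlen _; ext w
            by_contra hw
            exact absurd (hlen w (Finsupp.mem_support_iff.mpr (by simpa using hw))) (by omega)
  | succ n ih =>
    intro c hlen hcomb
    have inj0 : Function.Injective (fun w : List (Fin 2) => w ++ [(0 : Fin 2)]) :=
      List.append_left_injective _
    have inj1 : Function.Injective (fun w : List (Fin 2) => w ++ [(1 : Fin 2)]) :=
      List.append_left_injective _
    set c0 := Finsupp.comapDomain _ c inj0.injOn with hc0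
    set c1 := Finsupp.comapDomain _ c inj1.injOn with hc1
    have hdec : c = Finsupp.single [] (c [])
        + Finsupp.mapDomain (fun w => w ++ [(0 : Fin 2)]) c0
        + Finsupp.mapDomain (fun w => w ++ [(1 : Fin 2)]) c1 := by
      ext w
      obtain rfl | ⟨t, i, rfl⟩ := w.eq_nil_or_concat
      · rw [Finsupp.add_apply, Finsupp.add_apply,
          Finsupp.mapDomain_notin_range _ _ (by simp),
          Finsupp.mapDomain_notin_range _ _ (by simp)]
        simp
      · rw [List.concat_eq_append]
        rcases fin2_cases i with rfl | rfl
        · rw [Finsupp.add_apply, Finsupp.add_apply,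
            Finsupp.mapDomain_apply inj0,
            Finsupp.mapDomain_notin_range _ _ (by
              rintro ⟨y, hy⟩
              simp only at hy
              have := (List.append_singleton_inj.mp hy).2
              exact absurd this (by decide)),
            hc0, Finsupp.comapDomain_apply]
          simp
        · rw [Finsupp.add_apply, Finsupp.add_apply,
            Finsupp.mapDomain_notin_range _ _ (by
              rintro ⟨y, hy⟩
              simp only at hy
              have := (List.append_singleton_inj.mp hy).2
              exact absurd this (by decide)),
            Finsupp.mapDomain_apply inj1,
            hc1, Finsupp.comapDomain_apply]
          simp
    have hE : algebraMap k R (c [])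
        + Finsupp.linearCombination k (mword a b) c0 * a
        + Finsupp.linearCombination k (mword a b) c1 * b = 0 := by
      have e0 : Finsupp.linearCombination k (mword a b)
          (Finsupp.mapDomain (fun w => w ++ [(0 : Fin 2)]) c0)
          = Finsupp.linearCombination k (mword a b) c0 * a := by
        have hfun : (mword a b ∘ fun w => w ++ [(0 : Fin 2)])
            = fun w : List (Fin 2) => mword a b w * a := by
          funext w; simp [mword_concat]
        rw [Finsupp.linearCombination_mapDomain, hfun, pull_right]
      have e1 : Finsupp.linearCombination k (mword a b)
          (Finsupp.mapDomain (fun w => w ++ [(1 : Fin 2)]) c1)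
          = Finsupp.linearCombination k (mword a b) c1 * b := by
        have hfun : (mword a b ∘ fun w => w ++ [(1 : Fin 2)])
            = fun w : List (Fin 2) => mword a b w * b := by
          funext w; simp [mword_concat]
        rw [Finsupp.linearCombination_mapDomain, hfun, pull_right]
      have := hcomb
      rw [hdec] at this
      rw [map_add, map_add, e0, e1, Finsupp.linearCombination_single, mword_nil] at this
      rwa [Algebra.algebraMap_eq_smul_one]
    obtain ⟨hcc, hg, hh⟩ := ringL ha hb H hE
    have hsup0 : ∀ w ∈ c0.support, w.length < n := by
      intro w hw
      rw [Finsupp.mem_support_iff, hc0, Finsupp.comapDomain_apply] at hw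
      have := hlen _ (Finsupp.mem_support_iff.mpr hw)
      simp only [List.length_append, List.length_singleton] at this
      omega
    have hsup1 : ∀ w ∈ c1.support, w.length < n := by
      intro w hw
      rw [Finsupp.mem_support_iff, hc1, Finsupp.comapDomain_apply] at hw
      have := hlen _ (Finsupp.mem_support_iff.mpr hw)
      simp only [List.length_append, List.length_singleton] at this
      omega
    have h0 : c0 = 0 := ih c0 hsup0 hg
    have h1 : c1 = 0 := ih c1 hsup1 hh
    rw [hdec, hcc, h0, h1]
    simp

/-- From linear independence of all words, get injective algebra hom from the free algebra. -/
lemma freeEmbed {a b : R} (hli : LinearIndependent k (mword a b)) :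
    ∃ f : FreeAlgebra k (Fin 2) →ₐ[k] R, Function.Injective f := by
  set Φ : FreeMonoid (Fin 2) →* R := FreeMonoid.lift ![a, b] with hΦdef
  have hΦ : LinearIndependent k (⇑Φ) := by
    have he : (⇑Φ) = mword a b ∘ FreeMonoid.toList := by
      funext w
      rw [hΦdef, FreeMonoid.lift_apply]
      rfl
    rw [he]
    exact hli.comp _ (fun x y hxy => by
      have := congrArg FreeMonoid.ofList hxy
      simpa using this)
  set φA : MonoidAlgebra k (FreeMonoid (Fin 2)) →ₐ[k] R :=
    (MonoidAlgebra.lift k R (FreeMonoid (Fin 2))) Φ with hφAdef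
  have hφA : Function.Injective φA := by
    have : ⇑φA = ⇑(Finsupp.linearCombination k ⇑Φ) ∘ MonoidAlgebra.coeff := by
      funext f
      rw [hφAdef, Function.comp_apply, MonoidAlgebra.lift_apply, Finsupp.linearCombination_apply]
    rw [this]
    exact Function.Injective.comp hΦ MonoidAlgebra.coeff_injective
  exact ⟨φA.comp (FreeAlgebra.equivMonoidAlgebraFreeMonoid (R := k)
      (X := Fin 2)).toAlgHom,
    hφA.comp (FreeAlgebra.equivMonoidAlgebraFreeMonoid (R := k) (X := Fin 2)).injective⟩

end Aux

/-- (Jategaonkar) Let `R` be a `k`-algebra that is a domain. If there is no injective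
`k`-algebra homomorphism from the free associative algebra `k⟨x,y⟩` on two generators
into `R`, then `R` is an Ore domain: for all nonzero `a b : R` we have
`Ra ∩ Rb ≠ 0` and `aR ∩ bR ≠ 0`. -/
theorem stmt_3 (k R : Type*) [Field k] [Ring R] [Nontrivial R] [NoZeroDivisors R]
    [Algebra k R]
    (hfree : ¬ ∃ f : FreeAlgebra k (Fin 2) →ₐ[k] R, Function.Injective f)
    (a b : R) (ha : a ≠ 0) (hb : b ≠ 0) :
    (∃ x : R, x ≠ 0 ∧ (∃ r : R, r * a = x) ∧ (∃ s : R, s * b = x)) ∧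
    (∃ y : R, y ≠ 0 ∧ (∃ r : R, a * r = y) ∧ (∃ s : R, b * s = y)) := by
  constructor
  · by_contra hcon
    have H : ∀ r s : R, r * a = s * b → r * a = 0 := by
      intro r s hrs
      by_contra hne
      exact hcon ⟨r * a, hne, ⟨r, rfl⟩, ⟨s, hrs.symm⟩⟩
    have hli : LinearIndependent k (mword a b) := by
      rw [linearIndependent_iff]
      intro l hl
      exact keyL ha hb H (l.support.sup List.length + 1) l
        (fun w hw => Nat.lt_succ_of_le (Finset.le_sup hw)) hl
    exact hfree (freeEmbed hli)
  · by_contra hcon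
    have H : ∀ r s : R, a * r = b * s → a * r = 0 := by
      intro r s hrs
      by_contra hne
      exact hcon ⟨a * r, hne, ⟨r, rfl⟩, ⟨s, hrs.symm⟩⟩
    have hli : LinearIndependent k (mword a b) := by
      rw [linearIndependent_iff]
      intro l hl
      exact keyR ha hb H (l.support.sup List.length + 1) l
        (fun w hw => Nat.lt_succ_of_le (Finset.le_sup hw)) hl
    exact hfree (freeEmbed hli)
end

section
/- Let R be an affine k-algebra that is a domain and let V be a frame of R. If R has subexponential growth, i.e. for every real number b > 1 one has dim_k V^n ≤ b^n for all sufficiently large n, then R contains no copy of the free associative algebra on two generators (there is no injective k-algebra homomorphism k⟨x, y⟩ → R), and consequently R is an Ore domain. -/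
open Filter Pointwise

section Helpers

variable {k R : Type*} [Field k] [Ring R] [Algebra k R]

private lemma listProdMemPow (W : Submodule k R) :
    ∀ (l : List R), (∀ x ∈ l, x ∈ W) → l.prod ∈ W ^ l.length := by
  intro l
  induction l with
  | nil => intro _; rw [List.prod_nil, List.length_nil, pow_zero]; exact Submodule.one_le.mp le_rfl
  | cons a t ih =>
      intro h
      rw [List.prod_cons, List.length_cons, pow_succ']
      exact Submodule.mul_mem_mul (h a (by simp)) (ih fun x hx => h x (by simp [hx]))

private lemma fgPow (W : Submodule k R) (h : W.FG) (n : ℕ) : (W ^ n).FG := by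
  induction n with
  | zero => simpa [pow_zero, Submodule.one_eq_span] using Submodule.fg_span_singleton _
  | succ n ih => rw [pow_succ]; exact Submodule.FG.mul ih h

private lemma powMono (W : Submodule k R) (h1 : (1:R) ∈ W) : Monotone fun n => W ^ n := by
  apply monotone_nat_of_le_succ
  intro n x hx
  rw [pow_succ]
  simpa using Submodule.mul_mem_mul hx h1

/-- If all length-`n` words in `a`, `b` are linearly independent for every `n`, then the
algebra has exponential growth, contradicting the subexponential growth hypothesis. -/
private lemma noIndepWords (V : Submodule k R) (hfg : V.FG) (h1 : (1:R) ∈ V)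
    (htop : (⨆ n : ℕ, V ^ n) = ⊤)
    (hsub : ∀ b : ℝ, 1 < b → ∀ᶠ n in atTop, (Module.finrank k ↥(V ^ n) : ℝ) ≤ b ^ n)
    (a b : R)
    (hind : ∀ n : ℕ, LinearIndependent k
      (fun s : Fin n → Fin 2 => (List.ofFn fun i => ![a, b] (s i)).prod)) :
    False := by
  have hD : Directed (· ≤ ·) fun n : ℕ => V ^ n := (powMono V h1).directed_le
  have hmem : ∀ x : R, ∃ m : ℕ, x ∈ V ^ m := by
    intro x
    have : x ∈ ⨆ n : ℕ, V ^ n := htop ▸ Submodule.mem_top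
    exact (Submodule.mem_iSup_of_directed _ hD).mp this
  obtain ⟨ma, hma⟩ := hmem a
  obtain ⟨mb, hmb⟩ := hmem b
  set m : ℕ := max ma mb + 1 with hm
  have hm1 : 1 ≤ m := Nat.le_add_left 1 _
  clear_value m
  have ham : a ∈ V ^ m := powMono V h1 (show ma ≤ m by omega) hma
  have hbm : b ∈ V ^ m := powMono V h1 (show mb ≤ m by omega) hmb
  -- each word of length n lies in V ^ (m * n)
  have hword : ∀ (n : ℕ) (s : Fin n → Fin 2),
      (List.ofFn fun i => ![a, b] (s i)).prod ∈ V ^ (m * n) := by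
    intro n s
    have : (List.ofFn fun i => ![a, b] (s i)).prod ∈ (V ^ m) ^ n := by
      have := listProdMemPow (V ^ m) (List.ofFn fun i => ![a, b] (s i)) ?_
      · simpa using this
      · intro x hx
        rw [List.mem_ofFn] at hx
        obtain ⟨i, rfl⟩ := hx
        rcases Fin.exists_fin_two.mp ⟨(s i), rfl⟩ with h | h <;> simp [h, ham, hbm]
    rwa [← pow_mul] at this
  -- dimension lower bound
  have hdim : ∀ n : ℕ, (2 : ℕ) ^ n ≤ Module.finrank k ↥(V ^ (m * n)) := by
    intro n
    haveI : FiniteDimensional k ↥(V ^ (m * n)) :=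
      (Submodule.fg_iff_finiteDimensional _).mp (fgPow V hfg _)
    have hli : LinearIndependent k
        (fun s : Fin n → Fin 2 => (⟨_, hword n s⟩ : ↥(V ^ (m * n)))) := by
      apply LinearIndependent.of_comp (V ^ (m * n)).subtype
      exact hind n
    have := hli.fintype_card_le_finrank
    simpa [Fintype.card_fun] using this
  -- choose the subexponential bound
  set c : ℝ := (2 : ℝ) ^ ((1 : ℝ) / (2 * m)) with hc
  have hc1 : 1 < c := by
    rw [hc]
    apply Real.one_lt_rpow_iff_of_pos (by norm_num) |>.mpr
    left
    constructor
    · norm_num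
    · positivity
  obtain ⟨N, hN⟩ := eventually_atTop.mp (hsub c hc1)
  set n : ℕ := N + 1 with hn
  clear_value n
  have hn1 : 1 ≤ n := by omega
  have hmn : N ≤ m * n := by calc N ≤ n := by omega
    _ ≤ m * n := Nat.le_mul_of_pos_left n hm1
  have h2 : ((2 : ℕ) ^ n : ℝ) ≤ c ^ (m * n) :=
    le_trans (by exact_mod_cast hdim n) (hN (m * n) hmn)
  have h3 : c ^ (m * n) < (2 : ℝ) ^ n := by
    rw [hc, ← Real.rpow_natCast ((2:ℝ) ^ ((1:ℝ)/(2*m))) (m * n),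
      ← Real.rpow_mul (by norm_num : (0:ℝ) ≤ 2), ← Real.rpow_natCast (2:ℝ) n]
    apply Real.rpow_lt_rpow_left_iff (by norm_num : (1:ℝ) < 2) |>.mpr
    have hmpos : (0:ℝ) < m := by exact_mod_cast hm1
    have hnpos : (0:ℝ) < n := by exact_mod_cast hn1
    push_cast
    rw [div_mul_eq_mul_div, one_mul, div_lt_iff₀ (by positivity)]
    nlinarith [mul_pos hmpos hnpos]
  have := lt_of_le_of_lt h2 h3
  push_cast at this
  linarith

/-- Right-hand (common left multiple) version: if `Ra ∩ Rb = 0` then words in `a, b`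
are linearly independent. -/
private lemma indepWordsRight [Nontrivial R] [NoZeroDivisors R] (a b : R)
    (ha : a ≠ 0) (hb : b ≠ 0)
    (H : ∀ r s : R, r * a = s * b → r * a = 0) :
    ∀ n : ℕ, LinearIndependent k
      (fun s : Fin n → Fin 2 => (List.ofFn fun i => ![a, b] (s i)).prod) := by
  intro n
  induction n with
  | zero =>
      apply LinearIndependent.of_subsingleton default
      simp
  | succ n ih =>
      rw [Fintype.linearIndependent_iff] at ih ⊢
      intro g hg
      set e := Fin.snocEquiv (fun _ : Fin (n+1) => Fin 2) with he
      have hw : ∀ (c : Fin 2) (t : Fin n → Fin 2),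
          (List.ofFn fun i => ![a, b] ((e (c, t)) i)).prod
            = (List.ofFn fun i => ![a, b] (t i)).prod * ![a, b] c := by
        intro c t
        rw [List.ofFn_succ']
        simp [e, Fin.snocEquiv, List.prod_concat]
      have hsum : ∑ s : Fin (n+1) → Fin 2, g s •
            (List.ofFn fun i => ![a, b] (s i)).prod
          = (∑ t : Fin n → Fin 2, g (e (0, t)) • (List.ofFn fun i => ![a, b] (t i)).prod) * a
            + (∑ t : Fin n → Fin 2, g (e (1, t)) • (List.ofFn fun i => ![a, b] (t i)).prod) * b := by
        rw [← Equiv.sum_comp e (fun s => g s • (List.ofFn fun i => ![a, b] (s i)).prod)]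
        rw [Fintype.sum_prod_type, Fin.sum_univ_two]
        simp only [hw, Finset.sum_mul, smul_mul_assoc]
        simp
      rw [hsum] at hg
      set S0 := ∑ t : Fin n → Fin 2, g (e (0, t)) • (List.ofFn fun i => ![a, b] (t i)).prod
      set S1 := ∑ t : Fin n → Fin 2, g (e (1, t)) • (List.ofFn fun i => ![a, b] (t i)).prod
      have h0 : S0 * a = 0 :=
        H S0 (-S1) (by rw [neg_mul]; exact eq_neg_of_add_eq_zero_left hg)
      have hS0 : S0 = 0 := by
        rcases mul_eq_zero.mp h0 with h | h
        · exact h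
        · exact absurd h ha
      have h1 : S1 * b = 0 := by rw [hS0, zero_mul, zero_add] at hg; exact hg
      have hS1 : S1 = 0 := by
        rcases mul_eq_zero.mp h1 with h | h
        · exact h
        · exact absurd h hb
      intro s
      obtain ⟨⟨c, t⟩, rfl⟩ : ∃ p, e p = s := ⟨e.symm s, e.apply_symm_apply s⟩
      fin_cases c
      · exact ih _ hS0 t
      · exact ih _ hS1 t

/-- Left-hand (common right multiple) version: if `aR ∩ bR = 0` then words in `a, b`
are linearly independent. -/
private lemma indepWordsLeft [Nontrivial R] [NoZeroDivisors R] (a b : R)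
    (ha : a ≠ 0) (hb : b ≠ 0)
    (H : ∀ r s : R, a * r = b * s → a * r = 0) :
    ∀ n : ℕ, LinearIndependent k
      (fun s : Fin n → Fin 2 => (List.ofFn fun i => ![a, b] (s i)).prod) := by
  intro n
  induction n with
  | zero =>
      apply LinearIndependent.of_subsingleton default
      simp
  | succ n ih =>
      rw [Fintype.linearIndependent_iff] at ih ⊢
      intro g hg
      set e := Fin.consEquiv (fun _ : Fin (n+1) => Fin 2) with he
      have hw : ∀ (c : Fin 2) (t : Fin n → Fin 2),
          (List.ofFn fun i => ![a, b] ((e (c, t)) i)).prod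
            = ![a, b] c * (List.ofFn fun i => ![a, b] (t i)).prod := by
        intro c t
        rw [List.ofFn_succ]
        simp [e, Fin.consEquiv, List.prod_cons]
      have hsum : ∑ s : Fin (n+1) → Fin 2, g s •
            (List.ofFn fun i => ![a, b] (s i)).prod
          = a * (∑ t : Fin n → Fin 2, g (e (0, t)) • (List.ofFn fun i => ![a, b] (t i)).prod)
            + b * (∑ t : Fin n → Fin 2, g (e (1, t)) • (List.ofFn fun i => ![a, b] (t i)).prod) := by
        rw [← Equiv.sum_comp e (fun s => g s • (List.ofFn fun i => ![a, b] (s i)).prod)]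
        rw [Fintype.sum_prod_type, Fin.sum_univ_two]
        simp only [hw, Finset.mul_sum, mul_smul_comm]
        simp
      rw [hsum] at hg
      set S0 := ∑ t : Fin n → Fin 2, g (e (0, t)) • (List.ofFn fun i => ![a, b] (t i)).prod
      set S1 := ∑ t : Fin n → Fin 2, g (e (1, t)) • (List.ofFn fun i => ![a, b] (t i)).prod
      have h0 : a * S0 = 0 :=
        H S0 (-S1) (by rw [mul_neg]; exact eq_neg_of_add_eq_zero_left hg)
      have hS0 : S0 = 0 := by
        rcases mul_eq_zero.mp h0 with h | h
        · exact absurd h ha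
        · exact h
      have h1 : b * S1 = 0 := by rw [hS0, mul_zero, zero_add] at hg; exact hg
      have hS1 : S1 = 0 := by
        rcases mul_eq_zero.mp h1 with h | h
        · exact absurd h hb
        · exact h
      intro s
      obtain ⟨⟨c, t⟩, rfl⟩ : ∃ p, e p = s := ⟨e.symm s, e.apply_symm_apply s⟩
      fin_cases c
      · exact ih _ hS0 t
      · exact ih _ hS1 t

end Helpers

section FreeWords

variable (k : Type*) [Field k]

private lemma singleListProd {G : Type*} [Monoid G] (l : List G) :
    (l.map fun g => MonoidAlgebra.single g (1:k)).prod = MonoidAlgebra.single l.prod 1 := by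
  induction l with
  | nil => simp [MonoidAlgebra.one_def]
  | cons a t ih => simp [ih, MonoidAlgebra.single_mul_single]

private lemma freeMonoidWordInj (n : ℕ) :
    Function.Injective fun s : Fin n → Fin 2 =>
      (List.ofFn fun i => FreeMonoid.of (s i)).prod := by
  have key : ∀ (n : ℕ) (s : Fin n → Fin 2),
      FreeMonoid.toList ((List.ofFn fun i => FreeMonoid.of (s i)).prod) = List.ofFn s := by
    intro n
    induction n with
    | zero => intro s; simp
    | succ n ih =>
        intro s
        rw [List.ofFn_succ, List.prod_cons, FreeMonoid.toList_mul, ih, FreeMonoid.toList_of,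
          List.ofFn_succ]
        rfl
  intro s t hst
  have h2 : List.ofFn s = List.ofFn t := by
    have := congrArg FreeMonoid.toList hst
    simpa [key] using this
  exact List.ofFn_inj.mp h2

/-- The monomials of a fixed length in the free algebra on two generators are
linearly independent. -/
private lemma indepFreeWords (n : ℕ) : LinearIndependent k
    (fun s : Fin n → Fin 2 =>
      (List.ofFn fun i =>
        (![FreeAlgebra.ι k 0, FreeAlgebra.ι k 1] : Fin 2 → FreeAlgebra k (Fin 2)) (s i)).prod) := by
  set e := FreeAlgebra.equivMonoidAlgebraFreeMonoid (R := k) (X := Fin 2) with he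
  apply LinearIndependent.of_comp e.toLinearMap
  have hcomp : (⇑e.toLinearMap ∘ fun s : Fin n → Fin 2 =>
      (List.ofFn fun i =>
        (![FreeAlgebra.ι k 0, FreeAlgebra.ι k 1] : Fin 2 → FreeAlgebra k (Fin 2)) (s i)).prod)
      = fun s : Fin n → Fin 2 =>
        MonoidAlgebra.single ((List.ofFn fun i => FreeMonoid.of (s i)).prod) (1:k) := by
    funext s
    simp only [Function.comp_apply, AlgEquiv.toLinearMap_apply]
    rw [map_list_prod]
    rw [← singleListProd k (List.ofFn fun i => FreeMonoid.of (s i))]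
    congr 1
    rw [List.map_ofFn, List.map_ofFn]
    congr 1
    funext i
    simp only [Function.comp_apply]
    have hι : ∀ x : Fin 2, e (FreeAlgebra.ι k x) = MonoidAlgebra.single (FreeMonoid.of x) 1 := by
      intro x
      simp [he, FreeAlgebra.equivMonoidAlgebraFreeMonoid, MonoidAlgebra.of_apply]
    rcases Fin.exists_fin_two.mp ⟨s i, rfl⟩ with h | h <;> simp [h, hι]
  rw [hcomp]
  have hb : LinearIndependent k (fun m : FreeMonoid (Fin 2) => MonoidAlgebra.single m (1:k)) := by
    have := (Finsupp.basisSingleOne (R := k) (ι := FreeMonoid (Fin 2))).linearIndependent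
    exact (MonoidAlgebra.basis (FreeMonoid (Fin 2)) k).linearIndependent
  exact hb.comp _ (freeMonoidWordInj n)

end FreeWords

/-- `γ(f) = limsup_{n→∞} log f(n) / log n`, as an extended real number. -/
noncomputable def gammaGrowth (f : ℕ → ℝ) : EReal :=
  Filter.atTop.limsup fun n : ℕ => ((Real.log (f n) / Real.log n : ℝ) : EReal)

/-- A frame of an affine `k`-algebra `A`: a finite-dimensional subspace containing `1`
which generates `A` as a `k`-algebra. -/
def IsFrame (k : Type*) {A : Type*} [Field k] [Ring A] [Algebra k A]
    (V : Submodule k A) : Prop :=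
  FiniteDimensional k ↥V ∧ (1 : A) ∈ V ∧ (⨆ n : ℕ, V ^ n) = ⊤

/-- The Gelfand–Kirillov dimension of `A` computed from the frame `V`:
`limsup_{n→∞} log (dim_k Vⁿ) / log n`. -/
noncomputable def algGK (k : Type*) {A : Type*} [Field k] [Ring A] [Algebra k A]
    (V : Submodule k A) : EReal :=
  gammaGrowth fun n => (Module.finrank k ↥(V ^ n) : ℝ)

/-- Let `R` be an affine `k`-algebra which is a domain, with frame `V`.  If `R` has
subexponential growth (for every real `b > 1`, `dim_k Vⁿ ≤ bⁿ` for all large `n`),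
then there is no injective `k`-algebra homomorphism `k⟨x,y⟩ → R`, and consequently
`R` is an Ore domain. -/
theorem stmt_4 (k R : Type*) [Field k] [Ring R] [Nontrivial R] [NoZeroDivisors R]
    [Algebra k R] (V : Submodule k R) (hV : IsFrame k V)
    (hsub : ∀ b : ℝ, 1 < b → ∀ᶠ n in atTop, (Module.finrank k ↥(V ^ n) : ℝ) ≤ b ^ n) :
    (¬ ∃ f : FreeAlgebra k (Fin 2) →ₐ[k] R, Function.Injective f) ∧
    (∀ a b : R, a ≠ 0 → b ≠ 0 →
      (∃ x : R, x ≠ 0 ∧ (∃ r : R, r * a = x) ∧ (∃ s : R, s * b = x)) ∧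
      (∃ y : R, y ≠ 0 ∧ (∃ r : R, a * r = y) ∧ (∃ s : R, b * s = y))) := by
  obtain ⟨hfd, h1, htop⟩ := hV
  have hfg : V.FG := (Submodule.fg_iff_finiteDimensional V).mpr hfd
  constructor
  · rintro ⟨f, hf⟩
    apply noIndepWords V hfg h1 htop hsub (f (FreeAlgebra.ι k 0)) (f (FreeAlgebra.ι k 1))
    intro n
    have heq : (fun s : Fin n → Fin 2 =>
        (List.ofFn fun i => ![f (FreeAlgebra.ι k 0), f (FreeAlgebra.ι k 1)] (s i)).prod)
        = ⇑f.toLinearMap ∘ (fun s : Fin n → Fin 2 =>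
          (List.ofFn fun i =>
            (![FreeAlgebra.ι k 0, FreeAlgebra.ι k 1] : Fin 2 → FreeAlgebra k (Fin 2)) (s i)).prod) := by
      funext s
      simp only [Function.comp_apply, AlgHom.toLinearMap_apply]
      rw [map_list_prod, List.map_ofFn]
      congr 1
      apply List.ofFn_inj.mpr
      funext i
      rcases Fin.exists_fin_two.mp ⟨s i, rfl⟩ with h | h <;> simp [h]
    rw [heq]
    exact (indepFreeWords k n).map' f.toLinearMap (LinearMap.ker_eq_bot.mpr hf)
  · intro a b ha hb
    constructor
    · by_contra hcon
      apply noIndepWords V hfg h1 htop hsub a b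
      apply indepWordsRight a b ha hb
      intro r s hrs
      by_contra hne
      exact hcon ⟨r * a, hne, ⟨r, rfl⟩, ⟨s, hrs.symm⟩⟩
    · by_contra hcon
      apply noIndepWords V hfg h1 htop hsub a b
      apply indepWordsLeft a b ha hb
      intro r s hrs
      by_contra hne
      exact hcon ⟨a * r, hne, ⟨r, rfl⟩, ⟨s, hrs.symm⟩⟩
end

section
/- Let A be an affine k-algebra that is a Noetherian domain with GK(A) > 0. Then for every nonzero proper left ideal I of A, the quotient module A/I satisfies GK(A/I) ≤ GK(A) − 1. -/
open Filter Pointwise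

/-- The Gelfand–Kirillov dimension of an `A`-module `M` computed from the frame `V`
and a finite-dimensional generating subspace `F`:
`limsup log (dim_k (Vⁿ·F)) / log n`. -/
noncomputable def modGKWith {k A : Type*} [Field k] [Ring A] [Algebra k A]
    (V : Submodule k A) {M : Type*} [AddCommGroup M] [Module A M] [Module k M]
    [IsScalarTower k A M] (F : Submodule k M) : EReal :=
  gammaGrowth fun n =>
    (Module.finrank k
      ↥(Submodule.span k (((V ^ n : Submodule k A) : Set A) • (F : Set M))) : ℝ)

lemma aux_lt_of_lt_add_one {x : EReal} {a : ℝ} (h : (a : EReal) < x + 1) :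
    ((a - 1 : ℝ) : EReal) < x := by
  induction x using EReal.rec with
  | bot => simp only [show (⊥ : EReal) + 1 = ⊥ from rfl] at h; exact absurd h (not_lt_bot)
  | coe b =>
      have : (a : EReal) < ((b + 1 : ℝ) : EReal) := by push_cast at h ⊢; exact h
      rw [EReal.coe_lt_coe_iff] at this
      exact_mod_cast EReal.coe_lt_coe_iff.mpr (by linarith)
  | top => exact EReal.coe_lt_top _

lemma key_analytic (f d : ℕ → ℕ) (N : ℕ → ℕ) (C : ℕ) (hC1 : 1 ≤ C)
    (hfd : ∀ n, 2 ≤ n → n * f n ≤ d (N n))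
    (hf1 : ∀ n, 1 ≤ f n) (hd1 : ∀ n, 1 ≤ d n)
    (hNlb : ∀ n, n ≤ N n) (hNub : ∀ n, 1 ≤ n → N n ≤ C * n) :
    gammaGrowth (fun n => (f n : ℝ)) + 1 ≤ gammaGrowth (fun n => (d n : ℝ)) := by
  set γf := gammaGrowth (fun n => (f n : ℝ)) with hγf
  set γd := gammaGrowth (fun n => (d n : ℝ)) with hγd
  have claim0 : (0 : EReal) ≤ γd := by
    refine Filter.le_limsup_of_frequently_le (Filter.Eventually.frequently ?_) (by isBoundedDefault)
    filter_upwards [eventually_ge_atTop 2] with n hn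
    have h1 : (1:ℝ) < (n:ℝ) := by exact_mod_cast hn
    have : (0:ℝ) ≤ Real.log (d n) / Real.log n :=
      div_nonneg (Real.log_nonneg (by exact_mod_cast hd1 n)) (Real.log_pos h1).le
    exact_mod_cast EReal.coe_le_coe_iff.mpr this
  have claim : ∀ r : ℝ, (r : EReal) < γf + 1 → (r : EReal) ≤ γd := by
    intro r hr
    rcases le_or_gt r 0 with h0 | h0
    · exact le_trans (by exact_mod_cast EReal.coe_le_coe_iff.mpr h0) claim0
    obtain ⟨r', hrr', hr'⟩ := EReal.exists_between_coe_real hr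
    have hrr : r < r' := by exact_mod_cast hrr'
    have h1 : ((r' - 1 : ℝ) : EReal) < γf := aux_lt_of_lt_add_one hr'
    have freq := Filter.frequently_lt_of_lt_limsup (h := h1)
    set c := Real.log C with hc
    have hc0 : 0 ≤ c := Real.log_nonneg (by exact_mod_cast hC1)
    have hlogtend : Tendsto (fun n : ℕ => Real.log n) atTop atTop :=
      Real.tendsto_log_atTop.comp tendsto_natCast_atTop_atTop
    have hev : ∀ᶠ n : ℕ in atTop, 2 ≤ n ∧ r * c / (r' - r) ≤ Real.log n :=
      (eventually_ge_atTop 2).and (hlogtend.eventually_ge_atTop _)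
    have freq2 := freq.and_eventually hev
    have main : ∃ᶠ M in atTop, (r : EReal) ≤ ((Real.log (d M) / Real.log M : ℝ) : EReal) := by
      rw [Filter.frequently_atTop] at freq2 ⊢
      intro a
      obtain ⟨n, hna, hu, h2n, hlogc⟩ := freq2 (max a 2)
      refine ⟨N n, le_trans (le_trans (le_max_left a 2) hna) (hNlb n), ?_⟩
      have h2n' : 2 ≤ n := h2n
      have h1n : (1:ℝ) < (n:ℝ) := by exact_mod_cast h2n'
      have hlogn : 0 < Real.log n := Real.log_pos h1n
      have hfl : (r' - 1) * Real.log n < Real.log (f n) := by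
        rw [EReal.coe_lt_coe_iff] at hu
        exact (lt_div_iff₀ hlogn).mp hu
      have hdN : ((n * f n : ℕ) : ℝ) ≤ (d (N n) : ℝ) := by exact_mod_cast hfd n h2n'
      have hfpos : (0:ℝ) < (f n : ℝ) := by exact_mod_cast hf1 n
      have hnpos : (0:ℝ) < (n:ℝ) := by positivity
      have hlogmul : Real.log ((n * f n : ℕ) : ℝ) = Real.log n + Real.log (f n) := by
        push_cast
        exact Real.log_mul (ne_of_gt hnpos) (ne_of_gt hfpos)
      have hstep : r' * Real.log n < Real.log (d (N n)) := by
        have h2 : Real.log ((n * f n : ℕ) : ℝ) ≤ Real.log (d (N n)) :=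
          Real.log_le_log (by push_cast; positivity) hdN
        nlinarith [hfl, hlogmul, h2]
      have hNn1 : (1:ℝ) < (N n : ℝ) := by
        have := hNlb n; exact_mod_cast lt_of_lt_of_le h2n' this
      have hlogN : 0 < Real.log (N n) := Real.log_pos hNn1
      have hNle : Real.log (N n) ≤ Real.log n + c := by
        have h3 : (N n : ℝ) ≤ (C : ℝ) * n := by exact_mod_cast hNub n (by omega)
        have h4 : Real.log (N n) ≤ Real.log ((C:ℝ) * n) :=
          Real.log_le_log (by linarith) h3
        rw [Real.log_mul (by positivity) (ne_of_gt hnpos)] at h4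
        linarith
      have hrN : r * Real.log (N n) ≤ r' * Real.log n := by
        have h5 : r * c ≤ (r' - r) * Real.log n := by
          rw [div_le_iff₀ (by linarith)] at hlogc
          nlinarith [hlogc]
        nlinarith [mul_le_mul_of_nonneg_left hNle h0.le]
      rw [EReal.coe_le_coe_iff]
      rw [le_div_iff₀ hlogN]
      exact hrN.trans hstep.le
    exact Filter.le_limsup_of_frequently_le main (by isBoundedDefault)
  by_contra hcon
  rw [not_le] at hcon
  obtain ⟨r, h1, h2⟩ := EReal.exists_between_coe_real hcon
  exact absurd (claim r h2) (not_le.mpr h1)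

lemma aux_rank_nullity {k M N : Type*} [Field k] [AddCommGroup M] [Module k M]
    [AddCommGroup N] [Module k N] (φ : M →ₗ[k] N) (W : Submodule k M)
    [FiniteDimensional k W] :
    Module.finrank k (W.map φ) + Module.finrank k ↥(W ⊓ LinearMap.ker φ) =
      Module.finrank k W := by
  have h1 := LinearMap.finrank_range_add_finrank_ker (φ.domRestrict W)
  have h2 : LinearMap.range (φ.domRestrict W) = W.map φ := by
    ext y; simp [LinearMap.mem_range, Submodule.mem_map, LinearMap.domRestrict_apply]
  have h3 : LinearMap.ker (φ.domRestrict W) =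
      Submodule.comap W.subtype (W ⊓ LinearMap.ker φ) := by
    rw [Submodule.comap_inf, Submodule.comap_subtype_self, top_inf_eq]
    ext x; simp [LinearMap.mem_ker, LinearMap.domRestrict_apply]
  have h4 : Module.finrank k ↥(LinearMap.ker (φ.domRestrict W)) =
      Module.finrank k ↥(W ⊓ LinearMap.ker φ) := by
    rw [h3]
    exact (Submodule.comapSubtypeEquivOfLe
      (inf_le_left : W ⊓ LinearMap.ker φ ≤ W)).finrank_eq
  rw [h2, h4] at h1
  exact h1

/-- Let `A` be an affine Noetherian domain over `k` with `GK(A) > 0`.  Then for every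
nonzero proper left ideal `I` of `A`, the quotient module `A/I` satisfies
`GK(A/I) ≤ GK(A) − 1` (for every choice of finite-dimensional generating subspace of
`A/I`, the GK dimension being independent of such choices). -/
theorem stmt_5 (k A : Type*) [Field k] [Ring A] [Algebra k A]
    [Nontrivial A] [NoZeroDivisors A] [IsNoetherianRing A]
    (V : Submodule k A) (hV : IsFrame k V) (hGK : 0 < algGK k V)
    (I : Ideal A) (hI0 : I ≠ ⊥) (hI1 : I ≠ ⊤)
    (F : Submodule k (A ⧸ I)) (hFfin : FiniteDimensional k ↥F)
    (hFgen : Submodule.span A (F : Set (A ⧸ I)) = ⊤) :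
    modGKWith V F ≤ algGK k V - 1 := by
  obtain ⟨hVfin, hV1, hVgen⟩ := hV
  have hmono : Monotone (fun n : ℕ => V ^ n) :=
    fun a b h => pow_le_pow_right' (Submodule.one_le.mpr hV1) h
  have hfin : ∀ n : ℕ, FiniteDimensional k ↥(V ^ n) := fun n =>
    (Submodule.fg_iff_finiteDimensional _).mp
      (((Submodule.fg_iff_finiteDimensional V).mpr hVfin).pow n)
  have h1pow : ∀ n : ℕ, (1:A) ∈ V ^ n :=
    fun n => hmono (Nat.zero_le n) (Submodule.one_le.mp le_rfl)
  -- the quotient map as a `k`-linear map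
  let π : A →ₗ[k] A ⧸ I := LinearMap.restrictScalars k I.mkQ
  have hker : LinearMap.ker π = I.restrictScalars k := by
    ext a; simp [π, Submodule.Quotient.mk_eq_zero]
  have hsurj : Function.Surjective π := Submodule.mkQ_surjective I
  have hfinmap : ∀ n : ℕ, FiniteDimensional k ↥((V ^ n).map π) := by
    intro n; have := hfin n; infer_instance
  -- a nonzero element of I
  obtain ⟨x, hxI, hx0⟩ : ∃ x, x ∈ I ∧ x ≠ 0 := Submodule.exists_mem_ne_zero_of_ne_bot hI0
  obtain ⟨m, hxm⟩ : ∃ m : ℕ, x ∈ V ^ m := by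
    have hx : x ∈ ⨆ n : ℕ, V ^ n := hVgen ▸ Submodule.mem_top
    exact (Submodule.mem_iSup_of_directed _ (hmono.directed_le)).mp hx
  -- right multiplication by x
  let ρ : A →ₗ[k] A := LinearMap.mulRight k x
  have hρinj : Function.Injective ρ := fun a b hab => mul_left_injective₀ hx0 hab
  have hρrank : ∀ (W : Submodule k A), Module.finrank k ↥(W.map ρ) = Module.finrank k W :=
    fun W => ((Submodule.equivMapOfInjective ρ hρinj W).finrank_eq).symm
  -- F is contained in the image of some V ^ s
  obtain ⟨s, hFs⟩ : ∃ s : ℕ, F ≤ (V ^ s).map π := by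
    have hcompact := (Submodule.fg_iff_compact F).mp
      ((Submodule.fg_iff_finiteDimensional F).mpr hFfin)
    have hsup : F ≤ ⨆ n : ℕ, (V ^ n).map π := by
      rw [← Submodule.map_iSup, hVgen, Submodule.map_top, LinearMap.range_eq_top.mpr hsurj]
      exact le_top
    have hdir : DirectedOn (· ≤ ·) (Set.range fun n : ℕ => (V ^ n).map π) :=
      (Monotone.directed_le fun a b h => Submodule.map_mono (hmono h)).directedOn_range
    obtain ⟨W, hWmem, hFW⟩ :=
      (CompleteLattice.isCompactElement_iff_le_of_directed_sSup_le _ F).mp hcompact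
        (Set.range fun n : ℕ => (V ^ n).map π) ⟨_, ⟨0, rfl⟩⟩ hdir
        (by rwa [sSup_range])
    obtain ⟨s, rfl⟩ := hWmem
    exact ⟨s, hFW⟩
  -- abbreviations for the three dimension sequences
  set d : ℕ → ℕ := fun n => Module.finrank k ↥(V ^ n) with hd_def
  set g : ℕ → ℕ := fun n => Module.finrank k ↥((V ^ n).map π) with hg_def
  set f : ℕ → ℕ := fun n => Module.finrank k
    ↥(Submodule.span k (((V ^ n : Submodule k A) : Set A) • (F : Set (A ⧸ I)))) with hf_def
  -- span inclusion : f n ≤ g (n + s)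
  have hspan : ∀ n : ℕ, Submodule.span k
      (((V ^ n : Submodule k A) : Set A) • (F : Set (A ⧸ I))) ≤ (V ^ (n + s)).map π := by
    intro n
    rw [Submodule.span_le]
    rintro z hz
    rw [Set.mem_smul] at hz
    obtain ⟨v, hv, φ, hφ, rfl⟩ := hz
    obtain ⟨a, ha, rfl⟩ := hFs hφ
    refine ⟨v * a, ?_, ?_⟩
    · rw [pow_add]; exact Submodule.mul_mem_mul hv ha
    · show π (v * a) = v • π a
      simp only [π, LinearMap.coe_restrictScalars, Submodule.mkQ_apply]
      rw [← Submodule.Quotient.mk_smul, smul_eq_mul]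
  have hspanfin : ∀ n : ℕ, FiniteDimensional k
      ↥(Submodule.span k (((V ^ n : Submodule k A) : Set A) • (F : Set (A ⧸ I)))) := by
    intro n
    have := hfinmap (n + s)
    exact Submodule.finiteDimensional_of_le (hspan n)
  have hfg : ∀ n : ℕ, f n ≤ g (n + s) := by
    intro n
    have := hfinmap (n + s)
    exact Submodule.finrank_mono (hspan n)
  -- monotonicity of g
  have hgmono : ∀ ⦃a b : ℕ⦄, a ≤ b → g a ≤ g b := by
    intro a b hab
    have := hfinmap b
    exact Submodule.finrank_mono (Submodule.map_mono (hmono hab))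
  -- key step : g (n + m) + d n ≤ d (n + m)
  have hstep : ∀ n : ℕ, g (n + m) + d n ≤ d (n + m) := by
    intro n
    have hWfin := hfin (n + m)
    have e1 := aux_rank_nullity π (V ^ (n + m))
    rw [hker] at e1
    have hsub : (V ^ n).map ρ ≤ V ^ (n + m) ⊓ I.restrictScalars k := by
      rintro _ ⟨w, hw, rfl⟩
      refine ⟨?_, ?_⟩
      · show w * x ∈ V ^ (n + m)
        rw [pow_add]; exact Submodule.mul_mem_mul hw hxm
      · show w * x ∈ I
        simpa [smul_eq_mul] using I.smul_mem w hxI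
    have hinffin : FiniteDimensional k ↥(V ^ (n + m) ⊓ I.restrictScalars k) :=
      Submodule.finiteDimensional_of_le inf_le_left
    have e2 : Module.finrank k ↥((V ^ n).map ρ) ≤
        Module.finrank k ↥(V ^ (n + m) ⊓ I.restrictScalars k) :=
      Submodule.finrank_mono hsub
    rw [hρrank] at e2
    have e2' : d n ≤ Module.finrank k ↥(V ^ (n + m) ⊓ I.restrictScalars k) := e2
    have e1' : g (n + m) + Module.finrank k ↥(V ^ (n + m) ⊓ I.restrictScalars k) = d (n + m) := e1
    omega
  -- iterated key step
  have hiter : ∀ t n : ℕ, t * g n + d n ≤ d (n + t * m) := by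
    intro t
    induction t with
    | zero => intro n; simp
    | succ t ih =>
        intro n
        have h1 : g n ≤ g (n + t * m + m) := hgmono (by omega)
        have h2 := hstep (n + t * m)
        have h3 := ih n
        have h4 : (t + 1) * g n = t * g n + g n := by ring
        have h5 : n + (t + 1) * m = n + t * m + m := by ring
        rw [h5]
        omega
  -- positivity of f and d
  have hd1 : ∀ n : ℕ, 1 ≤ d n := by
    intro n
    have := hfin n
    have h1 : (Submodule.span k {(1:A)}) ≤ V ^ n := by
      rw [Submodule.span_le]; simpa using h1pow n
    calc 1 = Module.finrank k ↥(Submodule.span k {(1:A)}) :=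
          (finrank_span_singleton (one_ne_zero : (1:A) ≠ 0)).symm
      _ ≤ d n := Submodule.finrank_mono h1
  have hf1 : ∀ n : ℕ, 1 ≤ f n := by
    intro n
    have hnt : Nontrivial (A ⧸ I) := Submodule.Quotient.nontrivial_iff.mpr hI1
    have hFne : F ≠ ⊥ := by
      intro h
      rw [h] at hFgen
      obtain ⟨ψ, hψ⟩ := exists_ne (0 : A ⧸ I)
      apply hψ
      have hmem : ψ ∈ Submodule.span A ((⊥ : Submodule k (A ⧸ I)) : Set (A ⧸ I)) :=
        hFgen ▸ Submodule.mem_top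
      simpa using hmem
    obtain ⟨φ, hφF, hφ0⟩ := Submodule.exists_mem_ne_zero_of_ne_bot hFne
    have hmem : φ ∈ Submodule.span k
        (((V ^ n : Submodule k A) : Set A) • (F : Set (A ⧸ I))) := by
      apply Submodule.subset_span
      have : (1:A) • φ ∈ ((V ^ n : Submodule k A) : Set A) • (F : Set (A ⧸ I)) :=
        Set.smul_mem_smul (h1pow n) hφF
      simpa using this
    have := hspanfin n
    calc 1 = Module.finrank k ↥(Submodule.span k {φ}) :=
          (finrank_span_singleton hφ0).symm
      _ ≤ f n := Submodule.finrank_mono (by rwa [Submodule.span_le, Set.singleton_subset_iff])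
  -- the combinatorial inequality
  have hcomb : ∀ n : ℕ, 2 ≤ n → n * f n ≤ d (n + s + n * m) := by
    intro n hn
    calc n * f n ≤ n * g (n + s) := Nat.mul_le_mul_left n (hfg n)
      _ ≤ n * g (n + s) + d (n + s) := Nat.le_add_right _ _
      _ ≤ d (n + s + n * m) := hiter n (n + s)
  -- conclude by the analytic lemma
  have key := key_analytic f d (fun n => n + s + n * m) (1 + s + m) (by omega)
    hcomb hf1 hd1 (fun n => by show n ≤ n + s + n * m; omega)
    (fun n hn => by show n + s + n * m ≤ (1 + s + m) * n; nlinarith)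
  have hgoal : gammaGrowth (fun n => (f n : ℝ)) + 1 ≤ gammaGrowth (fun n => (d n : ℝ)) := key
  show modGKWith V F ≤ algGK k V - 1
  rw [EReal.le_sub_iff_add_le
    (Or.inl (by rw [← EReal.coe_one]; exact EReal.coe_ne_bot 1))
    (Or.inl (by rw [← EReal.coe_one]; exact EReal.coe_ne_top 1))]
  exact hgoal
end

section
/- Let k be a field, A an associative unital k-algebra, and M a simple left A-module such that the cardinality of k is strictly greater than the k-vector-space dimension of M (as cardinals). Then every A-module endomorphism θ of M is algebraic over k: there exists a nonzero polynomial p ∈ k[x] with p(θ) = 0 in End_A(M). -/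
universe u v w

open Polynomial in
/-- Division-ring version of `Transcendental.linearIndependent_sub_inv`. -/
theorem linearIndependent_sub_inv_divisionRing
    {F E : Type*} [Field F] [DivisionRing E] [Algebra F E] {x : E}
    (H : ∀ p : Polynomial F, p ≠ 0 → Polynomial.aeval x p ≠ 0) :
    LinearIndependent F fun a ↦ (x - algebraMap F E a)⁻¹ := by
  classical
  refine linearIndependent_iff'.2 fun s m hm i hi ↦ ?_
  have hnz (a : F) : x - algebraMap F E a ≠ 0 := fun h ↦
    H (X - C a) (X_sub_C_ne_zero a) (by simp [h])
  let b : E := aeval x (s.prod fun j ↦ (X : Polynomial F) - C j)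
  have h1 : ∀ i ∈ s, m i • (b * (x - algebraMap F E i)⁻¹) =
      m i • aeval x ((s.erase i).prod fun j ↦ (X : Polynomial F) - C j) := fun i hi ↦ by
    have : b = aeval x ((s.erase i).prod fun j ↦ (X : Polynomial F) - C j) *
        (x - algebraMap F E i) := by
      rw [show b = aeval x ((((s.erase i).prod fun j ↦ (X : Polynomial F) - C j)) *
          (X - C i)) from by rw [Finset.prod_erase_mul _ _ hi]]
      simp [map_mul]
    rw [this, mul_inv_cancel_right₀ (hnz i)]
  replace hm := congr(b * $(hm))
  simp_rw [mul_zero, Finset.mul_sum, mul_smul_comm, Finset.sum_congr rfl h1] at hm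
  let p : Polynomial F := s.sum fun i ↦ .C (m i) * (s.erase i).prod fun j ↦ .X - .C j
  have hp0 : p = 0 := by
    by_contra hp
    exact H p hp (by simp_rw [p, map_sum, map_mul, aeval_C, Algebra.smul_def] at hm ⊢; exact hm)
  replace hm := congr(Polynomial.eval i $hp0)
  have h2 : ∀ j ∈ s.erase i, m j * ((s.erase j).prod fun x ↦ i - x) = 0 := fun j hj ↦ by
    have := Finset.mem_erase_of_ne_of_mem (Finset.ne_of_mem_erase hj).symm hi
    simp_rw [← (s.erase j).prod_erase_mul _ this, sub_self, mul_zero]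
  simp_rw [eval_zero, p, eval_finset_sum, eval_mul, eval_prod, eval_sub, eval_X,
    eval_C, ← s.sum_erase_add _ hi,
    Finset.sum_eq_zero h2, zero_add] at hm
  exact eq_zero_of_ne_zero_of_mul_right_eq_zero (Finset.prod_ne_zero_iff.2 fun j hj ↦
    sub_ne_zero.2 (Finset.ne_of_mem_erase hj).symm) hm

/-- Let `k` be a field, `A` an associative unital `k`-algebra and `M` a simple left
`A`-module whose `k`-dimension is strictly smaller than the cardinality of `k`
(as cardinals). Then every `A`-module endomorphism `θ` of `M` is algebraic over `k`:
there is a nonzero polynomial `p ∈ k[x]` with `p(θ) = 0` in `End_A(M)`. -/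
theorem stmt_9 (k : Type u) (A : Type v) (M : Type w)
    [Field k] [Ring A] [Algebra k A]
    [AddCommGroup M] [Module A M] [Module k M] [IsScalarTower k A M]
    [SMulCommClass A k M]
    [IsSimpleModule A M]
    (hcard : Cardinal.lift.{u} (Module.rank k M) < Cardinal.lift.{w} (Cardinal.mk k))
    (θ : Module.End A M) :
    ∃ p : Polynomial k, p ≠ 0 ∧ Polynomial.aeval θ p = 0 := by
  classical
  by_contra h
  push_neg at h
  have H : ∀ p : Polynomial k, p ≠ 0 → Polynomial.aeval θ p ≠ 0 := h
  letI : DivisionRing (Module.End A M) := Module.End.instDivisionRing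
  have hLI : LinearIndependent k fun a : k ↦ (θ - algebraMap k (Module.End A M) a)⁻¹ :=
    linearIndependent_sub_inv_divisionRing H
  -- rank of End A M over k is at most rank of M
  have : Nontrivial M := IsSimpleModule.nontrivial A M
  obtain ⟨m, hm⟩ := exists_ne (0 : M)
  have hinj : Function.Injective fun f : Module.End A M ↦ f m := by
    intro f g hfg
    by_contra hne
    have : f - g ≠ 0 := sub_ne_zero.2 hne
    have hb := LinearMap.bijective_of_ne_zero (R := A) (f := f - g) this
    have : (f - g) m = 0 := by
      simp only at hfg
      simp [hfg]
    exact hm (by simpa [this] using (hb.1 (a₁ := m) (a₂ := 0) (by simpa using this)))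
  let L : Module.End A M →ₗ[k] M :=
    { toFun := fun f ↦ f m
      map_add' := fun f g ↦ rfl
      map_smul' := fun c f ↦ rfl }
  have hrank : Module.rank k (Module.End A M) ≤ Module.rank k M :=
    LinearMap.rank_le_of_injective L hinj
  have h1 : Cardinal.lift.{w} (Cardinal.mk k) ≤
      Cardinal.lift.{u} (Module.rank k (Module.End A M)) :=
    hLI.cardinal_lift_le_rank
  have h2 : Cardinal.lift.{u} (Module.rank k (Module.End A M)) ≤
      Cardinal.lift.{u} (Module.rank k M) := Cardinal.lift_le.2 hrank
  exact absurd ((h1.trans h2).trans_lt hcard) (lt_irrefl _)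
end

section
/- Let R be a simple left Noetherian ring that is not left Artinian. Then every left R-module of finite length is cyclic, i.e. generated by a single element. -/
/-!
Over a simple ring, a nonzero left ideal `I` cannot annihilate a nonzero module, because the
annihilator is a two-sided ideal. Given a submodule `A` of a finite-length module and a
non-Artinian left ideal `I`, pick a maximal submodule `A' ⋖ A`, an element `v ∈ A` with
`I v ⊄ A'`, and by induction `u ∈ A'` with `(I ∩ ann v) u = A'`; the left ideal `I ∩ ann v` is
still non-Artinian since `I / (I ∩ ann v) ≅ I v` is Artinian. Then `I (u + v)` contains `A'` and
`I v`, so it is all of `A`. Taking `A = M` and `I = R` shows that `M` is cyclic.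
-/

section

variable {R M : Type*} [Ring R] [AddCommGroup M] [Module R M]

theorem Submodule.colon_eq_bot_of_lt [IsSimpleRing R] {A' A : Submodule R M} (h : A' < A) :
    A'.colon (A : Set M) = ⊥ :=
  ((isSimpleRing_iff_isTwoSided_imp.mp ‹_›).2 _ inferInstance).resolve_right fun htop ↦
    h.not_ge ((Submodule.colon_eq_top_iff_subset _).1 htop)

theorem Submodule.exists_smul_notMem_of_lt [IsSimpleRing R] {A' A : Submodule R M} (h : A' < A)
    {I : Ideal R} (hI : I ≠ ⊥) : ∃ r ∈ I, ∃ v ∈ A, r • v ∉ A' := by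
  obtain ⟨r, hrI, hr⟩ : ∃ r ∈ I, r ∉ A'.colon (A : Set M) := by
    rw [Submodule.colon_eq_bot_of_lt h]
    exact SetLike.exists_of_lt (bot_lt_iff_ne_bot.2 hI)
  obtain ⟨v, hv, hrv⟩ := not_forall₂.1 (mt Submodule.mem_colon.2 hr)
  exact ⟨r, hrI, v, hv, hrv⟩

theorem Submodule.not_isArtinian_inf_ker {P : Type*} [AddCommGroup P] [Module R P]
    [IsArtinian R M] {N : Submodule R P} (f : P →ₗ[R] M) (hN : ¬IsArtinian R N) :
    ¬IsArtinian R ↥(N ⊓ LinearMap.ker f) := fun _ ↦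
  hN <| isArtinian_of_range_eq_ker (Submodule.inclusion (inf_le_left : N ⊓ LinearMap.ker f ≤ N))
    (f ∘ₗ N.subtype) <| by
      ext ⟨x, hx⟩
      simp [Submodule.range_inclusion]

theorem exists_map_toSpanSingleton_eq_of_not_isArtinian [IsSimpleRing R] [IsNoetherian R M]
    [IsArtinian R M] (A : Submodule R M) {I : Ideal R} (hI : ¬IsArtinian R I) :
    ∃ a ∈ A, Submodule.map (LinearMap.toSpanSingleton R M a) I = A := by
  induction A using IsArtinian.induction generalizing I with
  | _ A ih =>
  rcases eq_or_ne A ⊥ with rfl | hA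
  · exact ⟨0, zero_mem _, by simp⟩
  obtain ⟨A', -, hA'A⟩ := exists_le_covBy_of_lt (bot_lt_iff_ne_bot.2 hA)
  have hI₀ : I ≠ ⊥ := by
    rintro rfl
    exact hI inferInstance
  obtain ⟨r, hrI, v, hvA, hrv⟩ := Submodule.exists_smul_notMem_of_lt hA'A.lt hI₀
  obtain ⟨u, huA', hu⟩ := ih A' hA'A.lt
    (Submodule.not_isArtinian_inf_ker (LinearMap.toSpanSingleton R M v) hI)
  refine ⟨u + v, add_mem (hA'A.le huA') hvA, ?_⟩
  set N := Submodule.map (LinearMap.toSpanSingleton R M (u + v)) I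
  have hA'N : A' ≤ N := by
    rw [← hu]
    rintro _ ⟨k, ⟨hkI, hkv⟩, rfl⟩
    have hkv : k • v = 0 := LinearMap.mem_ker.1 hkv
    exact ⟨k, hkI, by simp [smul_add, hkv]⟩
  have hNA : N ≤ A := by
    rintro _ ⟨s, -, rfl⟩
    exact A.smul_mem s (add_mem (hA'A.le huA') hvA)
  have hrvN : r • v ∈ N := by
    have : r • v = r • (u + v) - r • u := by rw [smul_add]; abel
    rw [this]
    exact sub_mem ⟨r, hrI, rfl⟩ (hA'N (A'.smul_mem r huA'))
  exact (hA'A.eq_or_eq hA'N hNA).resolve_left fun h ↦ hrv (h ▸ hrvN)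

end

theorem stmt_10_general (R M : Type*) [Ring R] [IsSimpleRing R]
    (hNotArtinian : ¬ IsArtinianRing R)
    [AddCommGroup M] [Module R M] [IsNoetherian R M] [IsArtinian R M] :
    ∃ m : M, Submodule.span R ({m} : Set M) = ⊤ := by
  have hR : ¬IsArtinian R ↥(⊤ : Ideal R) := fun _ ↦
    hNotArtinian (isArtinian_of_linearEquiv (Submodule.topEquiv (R := R) (M := R)))
  obtain ⟨a, -, ha⟩ := exists_map_toSpanSingleton_eq_of_not_isArtinian (⊤ : Submodule R M) hR
  refine ⟨a, ?_⟩
  rwa [Submodule.map_top, ← LinearMap.span_singleton_eq_range] at ha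

/-- Let `R` be a simple left Noetherian ring that is not left Artinian. Then every
left `R`-module of finite length (equivalently, both Noetherian and Artinian as a
module) is cyclic, i.e. generated by a single element. -/
theorem stmt_10 (R M : Type*) [Ring R] [IsSimpleRing R]
    [IsNoetherianRing R] (hNotArtinian : ¬ IsArtinianRing R)
    [AddCommGroup M] [Module R M] [IsNoetherian R M] [IsArtinian R M] :
    ∃ m : M, Submodule.span R ({m} : Set M) = ⊤ :=
  stmt_10_general R M hNotArtinian
end

section
/- Let k be a field and A = k[x_1, …, x_r] the polynomial ring graded by total degree, and let M = ⊕_{i≥0} M_i be a finitely generated graded A-module (so A_i·M_j ⊆ M_{i+j}, where A_i is the space of homogeneous polynomials of degree i). Then each M_i is a finite-dimensional k-vector space, and there exists a polynomial h_M ∈ ℚ[x] of degree at most r − 1 such that dim_k M_n = h_M(n) for all sufficiently large n. -/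
open Filter
open Polynomial DirectSum
set_option linter.unusedSectionVars false
open Polynomial

private noncomputable def Dop (p : ℚ[X]) : ℚ[X] := p.comp (X + 1) - p

private lemma Dop_eval (p : ℚ[X]) (x : ℚ) : (Dop p).eval x = p.eval (x + 1) - p.eval x := by
  simp [Dop, eval_comp]

private lemma antidiff : ∀ (n : ℕ) (q : ℚ[X]), q.natDegree ≤ n →
    ∃ H : ℚ[X], Dop H = q ∧ H.natDegree ≤ n + 1 := by
  intro n
  induction n with
  | zero =>
    intro q hq
    refine ⟨C (q.coeff 0) * X, ?_, ?_⟩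
    · conv_rhs => rw [Polynomial.eq_C_of_natDegree_le_zero hq]
      simp only [Dop, mul_comp, C_comp, X_comp]
      ring
    · exact (natDegree_C_mul_le _ _).trans (by simp)
  | succ n IH =>
    intro q hq
    set a : ℚ := q.coeff (n + 1) with ha
    set p : ℚ[X] := C (a / (n + 2)) * X ^ (n + 2) with hp
    have hDp : Dop p = C (a / (n + 2)) * ((X + 1) ^ (n + 2) - X ^ (n + 2)) := by
      simp only [Dop, hp, mul_comp, C_comp, X_pow_comp]
      ring
    have hcoeff : ∀ N, (Dop p).coeff N =
        (a / (n + 2)) * ((n + 2).choose N - (X ^ (n + 2) : ℚ[X]).coeff N) := by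
      intro N
      rw [hDp, coeff_C_mul, coeff_sub, coeff_X_add_one_pow]
    have hdeg : (q - Dop p).natDegree ≤ n := by
      rw [natDegree_le_iff_coeff_eq_zero]
      intro N hN
      rw [coeff_sub, hcoeff]
      rcases lt_trichotomy N (n + 2) with h | h | h
      · have hN1 : N = n + 1 := by omega
        subst hN1
        rw [coeff_X_pow]
        simp only [if_neg (by omega : ¬ (n+1) = n + 2)]
        rw [Nat.choose_succ_self_right]
        push_cast
        field_simp
        ring
      · subst h
        have h1 : q.coeff (n + 2) = 0 := coeff_eq_zero_of_natDegree_lt (by omega)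
        rw [h1, coeff_X_pow, if_pos rfl, Nat.choose_self]
        ring
      · have h1 : q.coeff N = 0 := coeff_eq_zero_of_natDegree_lt (by omega)
        rw [h1, coeff_X_pow, if_neg (by omega), Nat.choose_eq_zero_of_lt (by omega)]
        ring
    obtain ⟨H', hH', hd'⟩ := IH (q - Dop p) hdeg
    refine ⟨H' + p, ?_, ?_⟩
    · have : Dop (H' + p) = Dop H' + Dop p := by
        simp only [Dop, add_comp]; ring
      rw [this, hH']; ring
    · refine (natDegree_add_le _ _).trans ?_
      refine max_le (hd'.trans (by omega)) ?_
      refine (natDegree_C_mul_le _ _).trans ?_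
      simp

section Graded
variable {k : Type*} [Field k] {M : Type*} [AddCommGroup M] [Module k M]
variable (ℳ : ℕ → Submodule k M) [DirectSum.Decomposition ℳ]

private lemma decompose_finsum {ι : Type*} (F : Finset ι) (f : ι → M) (n : ℕ) :
    ((decompose ℳ (∑ j ∈ F, f j) n : ℳ n) : M) = ∑ j ∈ F, ((decompose ℳ (f j) n : ℳ n) : M) := by
  classical
  induction F using Finset.induction_on with
  | empty => simp [decompose_zero]
  | insert _ _ hni ih =>
    rw [Finset.sum_insert hni, Finset.sum_insert hni, decompose_add, DirectSum.add_apply,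
      Submodule.coe_add, ih]

private lemma cmp_zero {i : ℕ} {v : M} (hv : v ∈ ⨆ j, ⨆ (_ : j ≠ i), ℳ j) :
    (decompose ℳ v i : M) = 0 := by
  rw [iSup_subtype'] at hv
  refine Submodule.iSup_induction (motive := fun w => (decompose ℳ w i : M) = 0) _ hv ?_ ?_ ?_
  · rintro ⟨j, hj⟩ x hx
    exact decompose_of_mem_ne ℳ hx hj
  · simp [decompose_zero]
  · intro x y hx hy
    rw [decompose_add, DirectSum.add_apply, Submodule.coe_add, hx, hy, add_zero]

private lemma internal_comap {B : Type*} [AddCommGroup B] [Module k B] (ι : B →ₗ[k] M)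
    (hinj : Function.Injective ι)
    (hcomp : ∀ (b : B) (n : ℕ), (decompose ℳ (ι b) n : M) ∈ LinearMap.range ι) :
    DirectSum.IsInternal (fun n => (ℳ n).comap ι) := by
  classical
  rw [DirectSum.isInternal_submodule_iff_iSupIndep_and_iSup_eq_top]
  constructor
  · rw [iSupIndep_def]
    intro i
    rw [Submodule.disjoint_def]
    intro b hbi hbs
    have h1 : ι b ∈ ℳ i := hbi
    have h2 : ι b ∈ ⨆ j, ⨆ (_ : j ≠ i), ℳ j := by
      have hle : Submodule.map ι (⨆ j, ⨆ (_ : j ≠ i), (ℳ j).comap ι) ≤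
          ⨆ j, ⨆ (_ : j ≠ i), ℳ j := by
        rw [Submodule.map_iSup]
        refine iSup_mono fun j => ?_
        rw [Submodule.map_iSup]
        exact iSup_mono fun hj => Submodule.map_comap_le ι (ℳ j)
      exact hle ⟨b, hbs, rfl⟩
    have := Submodule.disjoint_def.mp
      (iSupIndep_def.mp (DirectSum.Decomposition.isInternal ℳ).submodule_iSupIndep i) _ h1 h2
    exact hinj (by rw [this, map_zero])
  · rw [eq_top_iff]
    intro b _
    choose g hg using hcomp b
    have hb : b = ∑ j ∈ (decompose ℳ (ι b)).support, g j := by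
      apply hinj
      rw [map_sum]
      simp_rw [hg]
      exact (DirectSum.sum_support_decompose ℳ (ι b)).symm ▸ rfl
    rw [hb]
    refine Submodule.sum_mem _ fun j _ => ?_
    refine Submodule.mem_iSup_of_mem j ?_
    show ι (g j) ∈ ℳ j
    rw [hg j]
    exact (decompose ℳ (ι b) j).2

private lemma internal_map {Q : Type*} [AddCommGroup Q] [Module k Q] (π : M →ₗ[k] Q)
    (hsurj : Function.Surjective π)
    (hker : ∀ m : M, π m = 0 → ∀ n, π (decompose ℳ m n : M) = 0) :
    DirectSum.IsInternal (fun n => (ℳ n).map π) := by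
  classical
  rw [DirectSum.isInternal_submodule_iff_iSupIndep_and_iSup_eq_top]
  constructor
  · rw [iSupIndep_def]
    intro i
    rw [Submodule.disjoint_def]
    intro y hyi hys
    obtain ⟨u, hu, hu'⟩ := hyi
    have hle2 : (⨆ j, ⨆ (_ : j ≠ i), (ℳ j).map π) ≤
        Submodule.map π (⨆ j, ⨆ (_ : j ≠ i), ℳ j) :=
      iSup_le fun j => iSup_le fun hj =>
        Submodule.map_mono (le_iSup_of_le j (le_iSup_of_le hj le_rfl))
    have hys' : y ∈ Submodule.map π (⨆ j, ⨆ (_ : j ≠ i), ℳ j) := hle2 hys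
    obtain ⟨v, hv, hv'⟩ := hys'
    have h0 : π (u - v) = 0 := by rw [map_sub, hu', hv', sub_self]
    have h1 := hker _ h0 i
    have h2 : (decompose ℳ (u - v) i : M) = u - 0 := by
      rw [decompose_sub, DirectSum.sub_apply, AddSubgroupClass.coe_sub,
        decompose_of_mem_same ℳ hu, cmp_zero ℳ hv]
    rw [h2, sub_zero] at h1
    rw [← hu', h1]
  · calc ⨆ n, (ℳ n).map π = Submodule.map π (⨆ n, ℳ n) := (Submodule.map_iSup _ _).symm
    _ = ⊤ := by
        rw [(DirectSum.Decomposition.isInternal ℳ).submodule_iSup_eq_top, Submodule.map_top,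
          LinearMap.range_eq_top.mpr hsurj]

variable {r : ℕ} [Module (MvPolynomial (Fin r) k) M] [IsScalarTower k (MvPolynomial (Fin r) k) M]

private lemma lemD
    (hmul : ∀ (i j : ℕ) (p : MvPolynomial (Fin r) k), p.IsHomogeneous i →
      ∀ m ∈ ℳ j, p • m ∈ ℳ (i + j))
    {p : MvPolynomial (Fin r) k} {e : ℕ} (hp : p.IsHomogeneous e) (u : M) (n : ℕ) :
    (decompose ℳ (p • u) n : M) =
      if e ≤ n then p • (decompose ℳ u (n - e) : M) else 0 := by
  classical
  have hterm : ∀ j, p • (decompose ℳ u j : M) ∈ ℳ (e + j) :=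
    fun j => hmul e j p hp _ (decompose ℳ u j).2
  conv_lhs => rw [← DirectSum.sum_support_decompose ℳ u, Finset.smul_sum]
  rw [decompose_finsum]
  by_cases he : e ≤ n
  · rw [if_pos he]
    rw [Finset.sum_eq_single (n - e)]
    · exact decompose_of_mem_same ℳ
        (by simpa [show e + (n - e) = n by omega] using hterm (n - e))
    · intro j _ hne
      exact decompose_of_mem_ne ℳ (hterm j) (by omega)
    · intro hns
      have h0 : ((decompose ℳ u) (n - e) : M) = 0 := by
        rw [DFinsupp.notMem_support_iff.mp hns, Submodule.coe_zero]
      rw [h0, smul_zero]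
      simp [decompose_zero]
  · rw [if_neg he]
    refine Finset.sum_eq_zero fun j _ => ?_
    exact decompose_of_mem_ne ℳ (hterm j) (by omega)

private lemma lemA
    (hmul : ∀ (i j : ℕ) (p : MvPolynomial (Fin r) k), p.IsHomogeneous i →
      ∀ m ∈ ℳ j, p • m ∈ ℳ (i + j))
    (hfg : Module.Finite (MvPolynomial (Fin r) k) M) :
    ∀ n : ℕ, FiniteDimensional k ↥(ℳ n) := by
  classical
  obtain ⟨S, hS⟩ := Module.finite_def.mp hfg
  set A := MvPolynomial (Fin r) k
  -- the set of homogeneous components of generators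
  set T : Set M := ⋃ s ∈ (S : Set M),
    Set.range (fun j : ((decompose ℳ s).support : Finset ℕ) => ((decompose ℳ s j : ℳ j) : M))
    with hT
  have hT_fin : T.Finite :=
    Set.Finite.biUnion S.finite_toSet (fun s _ => Set.finite_range _)
  have hT_mem : ∀ t ∈ T, ∃ d, t ∈ ℳ d := by
    intro t ht
    simp only [hT, Set.mem_iUnion, Set.mem_range] at ht
    obtain ⟨s, _, j, rfl⟩ := ht
    exact ⟨j, (decompose ℳ s j).2⟩
  have hT_span : (⊤ : Submodule A M) ≤ Submodule.span A T := by
    rw [← hS]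
    rw [Submodule.span_le]
    intro s hs
    have : s = ∑ j ∈ (decompose ℳ s).support, ((decompose ℳ s j : ℳ j) : M) :=
      (DirectSum.sum_support_decompose ℳ s).symm
    rw [this]
    refine Submodule.sum_mem _ fun j hj => ?_
    refine Submodule.subset_span ?_
    simp only [hT, Set.mem_iUnion, Set.mem_range]
    exact ⟨s, hs, ⟨j, hj⟩, rfl⟩
  have hdegadd : ∀ a b : Fin r →₀ ℕ, (a + b).degree = a.degree + b.degree := by
    intro a b
    simp [Finsupp.degree_eq_weight_one, map_add]
  -- the spanning monomial sets
  set mon : ℕ → Set M := fun n => {z | ∃ (σ : Fin r →₀ ℕ) (t : M) (d : ℕ),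
    t ∈ T ∧ t ∈ ℳ d ∧ σ.degree + d = n ∧ z = (MvPolynomial.monomial σ (1 : k)) • t} with hmon
  have hmon_fin : ∀ n, (mon n).Finite := by
    intro n
    set E : Fin r →₀ ℕ := Finsupp.equivFunOnFinite.symm (fun _ => n) with hE
    refine Set.Finite.subset (Set.Finite.image
      (fun q : (Fin r →₀ ℕ) × M => (MvPolynomial.monomial q.1 (1 : k)) • q.2)
      ((Set.finite_Iic E).prod hT_fin)) ?_
    rintro z ⟨σ, t, d, ht, _, hsum, rfl⟩
    refine ⟨(σ, t), ⟨?_, ht⟩, rfl⟩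
    refine Set.mem_Iic.mpr ?_
    intro i
    have h1 : σ i ≤ σ.degree := Finsupp.le_degree i σ
    have h2 : σ.degree ≤ n := by omega
    simp only [hE, Finsupp.coe_equivFunOnFinite_symm]
    omega
  have key : ∀ m ∈ Submodule.span A T, ∀ n, (decompose ℳ m n : M) ∈ Submodule.span k (mon n) := by
    intro m hm
    induction hm using Submodule.span_induction with
    | mem t ht =>
      intro n
      obtain ⟨d, htd⟩ := hT_mem t ht
      by_cases hnd : n = d
      · subst hnd
        rw [decompose_of_mem_same ℳ htd]
        refine Submodule.subset_span ?_
        refine ⟨0, t, n, ht, htd, by simp [map_zero], ?_⟩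
        rw [MvPolynomial.monomial_zero', MvPolynomial.C_1, one_smul]
      · rw [decompose_of_mem_ne ℳ htd (Ne.symm hnd)]
        exact Submodule.zero_mem _
    | zero => intro n; simp [decompose_zero]
    | add x y _ _ hx hy =>
      intro n
      rw [decompose_add, DirectSum.add_apply, Submodule.coe_add]
      exact Submodule.add_mem _ (hx n) (hy n)
    | smul a m hm ih =>
      intro n
      have hsplit : a • m = ∑ v ∈ a.support,
          MvPolynomial.coeff v a • ((MvPolynomial.monomial v (1 : k)) • m) := by
        conv_lhs => rw [MvPolynomial.as_sum a]
        rw [Finset.sum_smul]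
        refine Finset.sum_congr rfl fun v _ => ?_
        rw [← smul_assoc]
        congr 1
        rw [MvPolynomial.smul_monomial, smul_eq_mul, mul_one]
      rw [hsplit, decompose_finsum]
      refine Submodule.sum_mem _ fun v _ => ?_
      have hsm : ((decompose ℳ (MvPolynomial.coeff v a • ((MvPolynomial.monomial v (1:k)) • m)) n : ℳ n) : M)
          = MvPolynomial.coeff v a • ((decompose ℳ ((MvPolynomial.monomial v (1:k)) • m) n : ℳ n) : M) := by
        rw [DirectSum.decompose_smul]
        rfl
      rw [hsm]
      refine Submodule.smul_mem _ _ ?_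
      have hhom : (MvPolynomial.monomial v (1 : k)).IsHomogeneous v.degree :=
        MvPolynomial.isHomogeneous_monomial _ rfl
      rw [lemD ℳ hmul hhom m n]
      by_cases he : v.degree ≤ n
      · rw [if_pos he]
        have hclaim : ∀ z, z ∈ Submodule.span k (mon (n - v.degree)) →
            (MvPolynomial.monomial v (1:k)) • z ∈ Submodule.span k (mon n) := by
          intro z hz
          induction hz using Submodule.span_induction with
          | mem z hz =>
            obtain ⟨σ, t, d, ht, htd, hsum, rfl⟩ := hz
            rw [← mul_smul, MvPolynomial.monomial_mul, mul_one]
            refine Submodule.subset_span ⟨v + σ, t, d, ht, htd, ?_, rfl⟩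
            rw [hdegadd]
            omega
          | zero => rw [smul_zero]; exact Submodule.zero_mem _
          | add z w _ _ hz hw => rw [smul_add]; exact Submodule.add_mem _ hz hw
          | smul c z _ hz =>
            rw [smul_comm]
            exact Submodule.smul_mem _ _ hz
        exact hclaim _ (ih (n - v.degree))
      · rw [if_neg he]
        exact Submodule.zero_mem _
  intro n
  have hle : ℳ n ≤ Submodule.span k (mon n) := by
    intro m hm
    have := key m (hT_span Submodule.mem_top) n
    rwa [decompose_of_mem_same ℳ hm] at this
  have : FiniteDimensional k ↥(Submodule.span k (mon n)) :=
    FiniteDimensional.span_of_finite k (hmon_fin n)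
  exact Submodule.finiteDimensional_of_le hle

end Graded

section Transfer
variable {k : Type*} [Field k] {r : ℕ}

private lemma factor_out (a : MvPolynomial (Fin (r+1)) k) :
    ∃ c, a = MvPolynomial.rename (R := k) Fin.succ
        (MvPolynomial.aeval (R := k) (Fin.cases 0 MvPolynomial.X) a) + c * MvPolynomial.X 0 := by
  have key : a - MvPolynomial.rename (R := k) Fin.succ (MvPolynomial.aeval (R := k) (Fin.cases 0 MvPolynomial.X) a)
      ∈ Ideal.span {(MvPolynomial.X 0 : MvPolynomial (Fin (r+1)) k)} := by
    induction a using MvPolynomial.induction_on with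
    | C c => simp [MvPolynomial.aeval_C, MvPolynomial.rename_C]
    | add p q hp hq =>
      have : p + q - MvPolynomial.rename (R := k) Fin.succ
          (MvPolynomial.aeval (R := k) (Fin.cases 0 MvPolynomial.X) (p + q)) =
          (p - MvPolynomial.rename (R := k) Fin.succ (MvPolynomial.aeval (R := k) (Fin.cases 0 MvPolynomial.X) p)) +
          (q - MvPolynomial.rename (R := k) Fin.succ (MvPolynomial.aeval (R := k) (Fin.cases 0 MvPolynomial.X) q)) := by
        rw [map_add, map_add]; ring
      rw [this]
      exact Ideal.add_mem _ hp hq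
    | mul_X p i hp =>
      have hXi : (MvPolynomial.X i : MvPolynomial (Fin (r+1)) k) - MvPolynomial.rename (R := k) Fin.succ
          (MvPolynomial.aeval (R := k) (Fin.cases 0 MvPolynomial.X) (MvPolynomial.X i))
          ∈ Ideal.span {(MvPolynomial.X 0 : MvPolynomial (Fin (r+1)) k)} := by
        induction i using Fin.cases with
        | zero =>
          rw [MvPolynomial.aeval_X]
          simp only [Fin.cases_zero, map_zero, sub_zero]
          exact Ideal.subset_span rfl
        | succ j =>
          rw [MvPolynomial.aeval_X]
          simp only [Fin.cases_succ, MvPolynomial.rename_X, sub_self]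
          exact Ideal.zero_mem _
      have : p * MvPolynomial.X i - MvPolynomial.rename (R := k) Fin.succ
          (MvPolynomial.aeval (R := k) (Fin.cases 0 MvPolynomial.X) (p * MvPolynomial.X i)) =
          (p - MvPolynomial.rename (R := k) Fin.succ (MvPolynomial.aeval (R := k) (Fin.cases 0 MvPolynomial.X) p))
            * MvPolynomial.X i +
          (MvPolynomial.rename (R := k) Fin.succ (MvPolynomial.aeval (R := k) (Fin.cases 0 MvPolynomial.X) p)) *
          (MvPolynomial.X i - MvPolynomial.rename (R := k) Fin.succ
            (MvPolynomial.aeval (R := k) (Fin.cases 0 MvPolynomial.X) (MvPolynomial.X i))) := by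
        rw [map_mul, map_mul]; ring
      rw [this]
      exact Ideal.add_mem _ (Ideal.mul_mem_right _ _ hp) (Ideal.mul_mem_left _ _ hXi)
  rw [Ideal.mem_span_singleton] at key
  obtain ⟨c, hc⟩ := key
  exact ⟨c, by rw [mul_comm] at hc; linear_combination hc⟩

private lemma span_transfer {B : Type*} [AddCommGroup B]
    [Module (MvPolynomial (Fin (r+1)) k) B] [Module (MvPolynomial (Fin r) k) B]
    (hcomp : ∀ (a' : MvPolynomial (Fin r) k) (b : B),
      a' • b = (MvPolynomial.rename (R := k) Fin.succ) a' • b)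
    (hx : ∀ b : B, (MvPolynomial.X 0 : MvPolynomial (Fin (r+1)) k) • b = 0)
    {S : Set B} (hS : Submodule.span (MvPolynomial (Fin (r+1)) k) S = ⊤) :
    Submodule.span (MvPolynomial (Fin r) k) S = ⊤ := by
  rw [eq_top_iff]
  intro b hb0
  clear hb0
  have hb : b ∈ Submodule.span (MvPolynomial (Fin (r+1)) k) S := hS ▸ Submodule.mem_top
  induction hb using Submodule.span_induction with
  | mem z hz => exact Submodule.subset_span hz
  | zero => exact Submodule.zero_mem _
  | add z w _ _ hz hw => exact Submodule.add_mem _ hz hw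
  | smul a z _ hz =>
    obtain ⟨c, hc⟩ := factor_out (k := k) a
    rw [hc, add_smul, mul_smul, hx, smul_zero, add_zero, ← hcomp]
    exact Submodule.smul_mem _ _ hz

end Transfer

private lemma finrank_comap_eq {k : Type*} [Field k] {B M : Type*} [AddCommGroup B] [Module k B]
    [AddCommGroup M] [Module k M] (ι : B →ₗ[k] M) (hinj : Function.Injective ι)
    (Q : Submodule k M) :
    Module.finrank k ↥(Q.comap ι) = Module.finrank k ↥(LinearMap.range ι ⊓ Q) := by
  rw [LinearEquiv.finrank_eq (Submodule.equivMapOfInjective ι hinj (Q.comap ι)),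
    Submodule.map_comap_eq]

set_option maxHeartbeats 2000000 in
private lemma hilb (k : Type u_k) [Field k] :
    ∀ (r : ℕ) (M : Type u_m) [AddCommGroup M] [Module (MvPolynomial (Fin r) k) M] [Module k M]
      [IsScalarTower k (MvPolynomial (Fin r) k) M] (ℳ : ℕ → Submodule k M),
      DirectSum.IsInternal ℳ →
      (∀ (i j : ℕ) (p : MvPolynomial (Fin r) k), p.IsHomogeneous i →
        ∀ m ∈ ℳ j, p • m ∈ ℳ (i + j)) →
      Module.Finite (MvPolynomial (Fin r) k) M →
      (∀ i : ℕ, FiniteDimensional k ↥(ℳ i)) ∧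
      ∃ h : Polynomial ℚ, (h = 0 ∨ h.natDegree + 1 ≤ r) ∧
        ∀ᶠ n in Filter.atTop, (Module.finrank k ↥(ℳ n) : ℚ) = h.eval (n : ℚ) := by
  intro r
  induction r with
  | zero =>
    intro M _ _ _ _ ℳ hdecomp hmul hfg
    haveI : Module.Finite k (MvPolynomial (Fin 0) k) :=
      Module.Finite.equiv (MvPolynomial.isEmptyAlgEquiv k (Fin 0)).symm.toLinearEquiv
    haveI : Module.Finite k M := Module.Finite.trans (MvPolynomial (Fin 0) k) M
    haveI : FiniteDimensional k M := inferInstance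
    refine ⟨fun i => inferInstance, 0, Or.inl rfl, ?_⟩
    have hfin : {i : ℕ | ℳ i ≠ ⊥}.Finite := by
      haveI F := hdecomp.submodule_iSupIndep.fintypeNeBotOfFiniteDimensional
      haveI : Finite ↥{i : ℕ | ℳ i ≠ ⊥} := @Finite.of_fintype _ F
      exact Set.toFinite _
    obtain ⟨N, hN⟩ := hfin.bddAbove
    rw [Filter.eventually_atTop]
    refine ⟨N + 1, fun n hn => ?_⟩
    have hbot : ℳ n = ⊥ := by
      by_contra hne
      exact absurd (hN hne) (by omega)
    rw [hbot]
    simp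
  | succ r IH =>
    intro M _ _ _ _ ℳ hdecomp hmul hfg
    classical
    letI := hdecomp.chooseDecomposition
    have hfd : ∀ n, FiniteDimensional k ↥(ℳ n) := lemA ℳ hmul hfg
    refine ⟨hfd, ?_⟩
    set A := MvPolynomial (Fin (r+1)) k with hA
    set A' := MvPolynomial (Fin r) k with hA'
    set x : A := MvPolynomial.X 0 with hx
    have hX : (x : A).IsHomogeneous 1 := MvPolynomial.isHomogeneous_X k 0
    set φ : A' →ₐ[k] A := MvPolynomial.rename (R := k) Fin.succ with hφ
    set μ : M →ₗ[A] M := LinearMap.lsmul A M x with hμ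
    set K : Submodule A M := LinearMap.ker μ with hK
    set N : Submodule A M := LinearMap.range μ with hN
    haveI : IsNoetherian A M := inferInstance
    -- ===== the kernel module =====
    set ι : ↥K →ₗ[k] M := K.subtype.restrictScalars k with hι
    have hιinj : Function.Injective ι := fun a b h => Subtype.ext (show (a : M) = b from h)
    have hmemK : ∀ m : M, m ∈ K ↔ x • m = 0 := by
      intro m
      rw [hK, LinearMap.mem_ker, hμ, LinearMap.lsmul_apply]
    have hcmpK : ∀ (b : ↥K) (n : ℕ),
        (DirectSum.decompose ℳ (ι b) n : M) ∈ LinearMap.range ι := by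
      intro b n
      have hb : x • (b : M) = 0 := (hmemK _).mp b.2
      have h := lemD ℳ hmul hX (b : M) (n + 1)
      rw [hb, if_pos (by omega : 1 ≤ n + 1)] at h
      have h0 : (DirectSum.decompose ℳ (0 : M) (n+1) : M) = 0 := by
        rw [DirectSum.decompose_zero]; rfl
      rw [h0] at h
      have hmem : (DirectSum.decompose ℳ (b : M) n : M) ∈ K := by
        rw [hmemK]
        simpa using h.symm
      exact ⟨⟨_, hmem⟩, rfl⟩
    set ℳK : ℕ → Submodule k ↥K := fun n => (ℳ n).comap ι with hℳK
    have hdecompK : DirectSum.IsInternal ℳK := internal_comap ℳ ι hιinj hcmpK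
    -- ===== the cokernel module =====
    set π : M →ₗ[k] (M ⧸ N) := N.mkQ.restrictScalars k with hπ
    have hπsurj : Function.Surjective π := N.mkQ_surjective
    have hπzero : ∀ m : M, m ∈ N → π m = 0 := by
      intro m hm
      show N.mkQ m = 0
      rw [Submodule.mkQ_apply, Submodule.Quotient.mk_eq_zero]
      exact hm
    have hπker : ∀ m : M, π m = 0 → ∀ n, π (DirectSum.decompose ℳ m n : M) = 0 := by
      intro m hm n
      have hmN : m ∈ N := by
        rwa [show π m = N.mkQ m from rfl, Submodule.mkQ_apply,
          Submodule.Quotient.mk_eq_zero] at hm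
      obtain ⟨w, hw⟩ := hmN
      have hw' : x • w = m := hw
      have h := lemD ℳ hmul hX w n
      rw [hw'] at h
      by_cases h1 : 1 ≤ n
      · rw [if_pos h1] at h
        rw [h]
        exact hπzero _ ⟨_, rfl⟩
      · rw [if_neg h1] at h
        rw [h, map_zero]
    set ℳC : ℕ → Submodule k (M ⧸ N) := fun n => (ℳ n).map π with hℳC
    have hdecompC : DirectSum.IsInternal ℳC := internal_map ℳ π hπsurj hπker
    -- ===== A'-module structures =====
    letI instK : Module A' ↥K := Module.compHom _ φ.toRingHom
    have hcompK2 : ∀ (a' : A') (b : ↥K), a' • b = φ a' • b := fun _ _ => rfl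
    letI instTowK : IsScalarTower k A' ↥K := ⟨fun c a' b => by
      rw [hcompK2, map_smul, smul_assoc, ← hcompK2]⟩
    have hxK : ∀ b : ↥K, x • b = 0 := by
      intro b
      apply Subtype.ext
      rw [Submodule.coe_smul]
      exact (hmemK _).mp b.2
    haveI hfgKA : Module.Finite A ↥K := Module.Finite.iff_fg.mpr (IsNoetherian.noetherian K)
    haveI hfgK : Module.Finite A' ↥K := by
      obtain ⟨S, hS⟩ := Module.finite_def.mp hfgKA
      exact Module.finite_def.mpr ⟨S, span_transfer hcompK2 hxK hS⟩
    have hmulK : ∀ (i j : ℕ) (p : A'), p.IsHomogeneous i →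
        ∀ m ∈ ℳK j, p • m ∈ ℳK (i + j) := by
      intro i j p hp m hm
      rw [hcompK2]
      show (((φ p) • m : ↥K) : M) ∈ ℳ (i + j)
      rw [Submodule.coe_smul]
      exact hmul i j (φ p) hp.rename_isHomogeneous _ hm
    letI instC : Module A' (M ⧸ N) := Module.compHom _ φ.toRingHom
    have hcompC2 : ∀ (a' : A') (c : M ⧸ N), a' • c = φ a' • c := fun _ _ => rfl
    letI instTowC : IsScalarTower k A' (M ⧸ N) := ⟨fun c a' b => by
      rw [hcompC2, map_smul, smul_assoc, ← hcompC2]⟩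
    have hxC : ∀ c : M ⧸ N, x • c = 0 := by
      intro c
      obtain ⟨m, rfl⟩ := N.mkQ_surjective c
      rw [← map_smul]
      exact hπzero _ ⟨m, rfl⟩
    haveI hfgCA : Module.Finite A (M ⧸ N) := inferInstance
    haveI hfgC : Module.Finite A' (M ⧸ N) := by
      obtain ⟨S, hS⟩ := Module.finite_def.mp hfgCA
      exact Module.finite_def.mpr ⟨S, span_transfer hcompC2 hxC hS⟩
    have hmulC : ∀ (i j : ℕ) (p : A'), p.IsHomogeneous i →
        ∀ c ∈ ℳC j, p • c ∈ ℳC (i + j) := by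
      intro i j p hp c hc
      obtain ⟨m, hm, rfl⟩ := hc
      rw [hcompC2]
      refine ⟨φ p • m, hmul i j (φ p) hp.rename_isHomogeneous _ hm, ?_⟩
      show N.mkQ (φ p • m) = φ p • (N.mkQ m)
      exact map_smul N.mkQ (φ p) m
    -- ===== apply the induction hypothesis =====
    obtain ⟨-, hKpoly⟩ := IH ↥K ℳK hdecompK hmulK hfgK
    obtain ⟨-, hCpoly⟩ := IH (M ⧸ N) ℳC hdecompC hmulC hfgC
    obtain ⟨hKp, hKcond, hKev⟩ := hKpoly
    obtain ⟨hCp, hCcond, hCev⟩ := hCpoly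
    -- ===== dimension bookkeeping =====
    set W : Submodule k M := LinearMap.ker ((LinearMap.lsmul A M x).restrictScalars k) with hW
    have hrangeι : LinearMap.range ι = W := by
      ext m
      constructor
      · rintro ⟨b, rfl⟩
        show ι b ∈ W
        rw [hW, LinearMap.mem_ker, LinearMap.coe_restrictScalars, LinearMap.lsmul_apply]
        exact (hmemK _).mp b.2
      · intro hm
        have : m ∈ K := by
          rw [hmemK]
          have := hm
          rwa [hW, LinearMap.mem_ker, LinearMap.coe_restrictScalars,
            LinearMap.lsmul_apply] at this
        exact ⟨⟨m, this⟩, rfl⟩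
    have hα : ∀ n, ∀ m ∈ ℳ n, ((LinearMap.lsmul A M x).restrictScalars k) m ∈ ℳ (n + 1) := by
      intro n m hm
      show x • m ∈ ℳ (n + 1)
      have := hmul 1 n x hX m hm
      rwa [Nat.add_comm] at this
    set α : ∀ n : ℕ, ↥(ℳ n) →ₗ[k] ↥(ℳ (n+1)) :=
      fun n => LinearMap.restrict _ (hα n) with hαdef
    set β : ∀ n : ℕ, ↥(ℳ n) →ₗ[k] (M ⧸ N) := fun n => π.comp (ℳ n).subtype with hβdef
    have e1 : ∀ n, Module.finrank k ↥(LinearMap.range (α n)) +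
        Module.finrank k ↥(ℳK n) = Module.finrank k ↥(ℳ n) := by
      intro n
      haveI := hfd n
      have h := LinearMap.finrank_range_add_finrank_ker (α n)
      have hker : Module.finrank k ↥(LinearMap.ker (α n)) = Module.finrank k ↥(ℳK n) := by
        rw [LinearMap.ker_restrict (hα n)]
        rw [finrank_comap_eq _ (Submodule.injective_subtype (ℳ n)) _,
          finrank_comap_eq ι hιinj (ℳ n), hrangeι, Submodule.range_subtype, inf_comm]
      rw [hker] at h
      exact h
    have hkerβ : ∀ n, LinearMap.ker (β (n+1)) = LinearMap.range (α n) := by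
      intro n
      ext m
      constructor
      · intro h
        have hm0 : π (m : M) = 0 := h
        have hmN : (m : M) ∈ N := by
          rwa [show π (m : M) = N.mkQ (m : M) from rfl, Submodule.mkQ_apply,
            Submodule.Quotient.mk_eq_zero] at hm0
        obtain ⟨w, hw⟩ := hmN
        have hw' : x • w = (m : M) := hw
        have h2 := lemD ℳ hmul hX w (n+1)
        rw [hw', if_pos (by omega : 1 ≤ n + 1),
          DirectSum.decompose_of_mem_same ℳ m.2] at h2
        refine ⟨⟨(DirectSum.decompose ℳ w ((n+1) - 1) : M),
          (DirectSum.decompose ℳ w ((n+1) - 1)).2⟩, ?_⟩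
        apply Subtype.ext
        rw [LinearMap.restrict_apply]
        exact h2.symm
      · rintro ⟨u, rfl⟩
        show π ((α n u : ↥(ℳ (n+1))) : M) = 0
        rw [hαdef, LinearMap.restrict_apply]
        exact hπzero _ ⟨(u : M), rfl⟩
    have e2 : ∀ n, Module.finrank k ↥(ℳC (n+1)) +
        Module.finrank k ↥(LinearMap.range (α n)) = Module.finrank k ↥(ℳ (n+1)) := by
      intro n
      haveI := hfd (n+1)
      have h := LinearMap.finrank_range_add_finrank_ker (β (n+1))
      rw [hkerβ n] at h
      have hrange : LinearMap.range (β (n+1)) = ℳC (n+1) := by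
        rw [hβdef, LinearMap.range_comp, Submodule.range_subtype]
      rw [hrange] at h
      exact h
    have key : ∀ n : ℕ, Module.finrank k ↥(ℳ (n+1)) + Module.finrank k ↥(ℳK n)
        = Module.finrank k ↥(ℳ n) + Module.finrank k ↥(ℳC (n+1)) := by
      intro n
      have h1 := e1 n
      have h2 := e2 n
      omega
    -- ===== assemble the polynomial =====
    rw [Filter.eventually_atTop] at hKev hCev
    obtain ⟨NK, hNK⟩ := hKev
    obtain ⟨NC, hNC⟩ := hCev
    set q : Polynomial ℚ := hCp.comp (Polynomial.X + 1) - hKp with hq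
    have hqev : ∀ n : ℕ, n ≥ max NK NC → (Module.finrank k ↥(ℳ (n+1)) : ℚ)
        - (Module.finrank k ↥(ℳ n) : ℚ) = q.eval (n : ℚ) := by
      intro n hn
      have h1 := hNK n (le_trans (le_max_left _ _) hn)
      have h2 := hNC (n+1) (by omega)
      have h3 := key n
      rw [hq, Polynomial.eval_sub, Polynomial.eval_comp, Polynomial.eval_add,
        Polynomial.eval_X, Polynomial.eval_one, ← h1]
      rw [show ((n : ℚ) + 1) = ((n + 1 : ℕ) : ℚ) by push_cast; ring, ← h2]
      have h3' : (Module.finrank k ↥(ℳ (n+1)) : ℚ) + (Module.finrank k ↥(ℳK n) : ℚ)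
          = (Module.finrank k ↥(ℳ n) : ℚ) + (Module.finrank k ↥(ℳC (n+1)) : ℚ) := by
        exact_mod_cast congrArg (fun z : ℕ => (z : ℚ)) h3
      linarith
    -- antidifference
    have hHex : ∃ H : Polynomial ℚ, Dop H = q ∧ H.natDegree ≤ r := by
      by_cases hq0 : q = 0
      · exact ⟨0, by rw [hq0]; simp [Dop], by simp⟩
      · obtain ⟨H, hH1, hH2⟩ := antidiff q.natDegree q le_rfl
        have hr1 : 1 ≤ r := by
          by_contra hr
          have hr0 : r = 0 := by omega
          have hK0 : hKp = 0 := by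
            rcases hKcond with h | h
            · exact h
            · omega
          have hC0 : hCp = 0 := by
            rcases hCcond with h | h
            · exact h
            · omega
          exact hq0 (by rw [hq, hK0, hC0]; simp)
        have hdK : hKp.natDegree ≤ r - 1 := by
          rcases hKcond with h | h
          · rw [h]; simp
          · omega
        have hdC : hCp.natDegree ≤ r - 1 := by
          rcases hCcond with h | h
          · rw [h]; simp
          · omega
        have hdq : q.natDegree ≤ r - 1 := by
          refine le_trans (Polynomial.natDegree_sub_le _ _) ?_
          refine max_le (le_trans (Polynomial.natDegree_comp_le) ?_) hdK
          have : (Polynomial.X + 1 : Polynomial ℚ).natDegree = 1 := by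
            simpa using Polynomial.natDegree_X_add_C (1 : ℚ)
          rw [this, mul_one]
          exact hdC
        exact ⟨H, hH1, le_trans hH2 (by omega)⟩
    obtain ⟨H, hHq, hHdeg⟩ := hHex
    set N0 := max NK NC with hN0
    set c : ℚ := (Module.finrank k ↥(ℳ N0) : ℚ) - H.eval (N0 : ℚ) with hc
    have hconst : ∀ n, n ≥ N0 →
        (Module.finrank k ↥(ℳ n) : ℚ) - H.eval (n : ℚ) = c := by
      intro n hn
      induction n, hn using Nat.le_induction with
      | base => rfl
      | succ n hn ih =>
        have hd := hqev n hn
        have hD : H.eval ((n : ℚ) + 1) - H.eval (n : ℚ) = q.eval (n : ℚ) := by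
          rw [← Dop_eval, hHq]
        rw [show ((n + 1 : ℕ) : ℚ) = (n : ℚ) + 1 by push_cast; ring]
        linarith
    refine ⟨H + Polynomial.C c, Or.inr ?_, ?_⟩
    · have : (H + Polynomial.C c).natDegree ≤ max H.natDegree (Polynomial.C c).natDegree :=
        Polynomial.natDegree_add_le _ _
      rw [Polynomial.natDegree_C] at this
      omega
    · rw [Filter.eventually_atTop]
      refine ⟨N0, fun n hn => ?_⟩
      have := hconst n hn
      rw [Polynomial.eval_add, Polynomial.eval_C]
      linarith

/-- (Hilbert) Let `A = k[x_1, …, x_r]` be graded by total degree and let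
`M = ⊕_{i≥0} M_i` be a finitely generated graded `A`-module (so homogeneous
polynomials of degree `i` map `M_j` into `M_{i+j}`).  Then each `M_i` is
finite-dimensional over `k`, and there is a polynomial `h_M ∈ ℚ[x]` of degree at
most `r − 1` with `dim_k M_n = h_M(n)` for all sufficiently large `n`. -/
theorem stmt_15 (k : Type*) [Field k] (r : ℕ) (M : Type*) [AddCommGroup M]
    [Module (MvPolynomial (Fin r) k) M] [Module k M]
    [IsScalarTower k (MvPolynomial (Fin r) k) M]
    (ℳ : ℕ → Submodule k M)
    (hdecomp : DirectSum.IsInternal ℳ)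
    (hmul : ∀ (i j : ℕ) (p : MvPolynomial (Fin r) k), p.IsHomogeneous i →
      ∀ m ∈ ℳ j, p • m ∈ ℳ (i + j))
    (hfg : Module.Finite (MvPolynomial (Fin r) k) M) :
    (∀ i : ℕ, FiniteDimensional k ↥(ℳ i)) ∧
    ∃ h : Polynomial ℚ, h.natDegree ≤ r - 1 ∧
      ∀ᶠ n in atTop, (Module.finrank k ↥(ℳ n) : ℚ) = h.eval (n : ℚ) := by
  obtain ⟨h1, h, hcond, hev⟩ := hilb k r M ℳ hdecomp hmul hfg
  refine ⟨h1, h, ?_, hev⟩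
  rcases hcond with h0 | hd
  · rw [h0]; simp
  · omega
end
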